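/- arXiv:2108.01860 — 4 statements merged into one kernel-verified Lean document; each statement's English description precedes it below -/
import Mathlib

section
/- Let A₁,…,A_n be p×p positive semi-definite matrices with average Ā = n⁻¹Σᵢ Aᵢ. Then the absolute value of Σ over distinct quadruples (i,j,k,ℓ) of tr(AᵢAⱼA_kA_ℓ) is at most n⁴ tr(Ā⁴) + 10 n² tr(Ā²) Σᵢ tr(Aᵢ²) + 13 (Σᵢ tr(Aᵢ²))². -/
/-!
Write `S = ∑ i, Aᵢ` and `q = ∑ i, tr (Aᵢ²)`. Möbius inversion on the set partitions of the four
positions turns the sum over distinct quadruples into `tr (S⁴)` plus a signed combination of sums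
in which some indices coincide; since `(i, j, k, l) ↦ tr (AᵢAⱼAₖAₗ)` is invariant under rotation,
only six kinds of such sums occur. Each is bounded through Cauchy–Schwarz for the Frobenius inner
product, e.g. `|∑ tr (AᵢSAᵢS)| ≤ q tr (S²)` and `|∑ tr (Aᵢ³S)| ≤ (q² + q tr (S²)) / 2`, and the
triangle inequality yields the constants `10 = 4 + 2 + 4` and `13 = 2 + 1 + 4 + 6`.
-/

theorem Fintype.sum_sum_sum_rotate {ι M : Type*} [Fintype ι] [AddCommMonoid M]
    (g : ι → ι → ι → M) : ∑ x, ∑ y, ∑ z, g z x y = ∑ x, ∑ y, ∑ z, g x y z :=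
  (Finset.sum_congr rfl fun _ _ => Finset.sum_comm).trans Finset.sum_comm

/- Möbius inversion on the partitions `π` of `{i, j, k, l}`, with weights
`μ(0̂, π) = ∏_{B ∈ π} (-1) ^ (|B| - 1) (|B| - 1)!`. -/
theorem ite_pairwise_ne_four_eq {ι R : Type*} [DecidableEq ι] [CommRing R] (i j k l : ι) (t : R) :
    (if i ≠ j ∧ i ≠ k ∧ i ≠ l ∧ j ≠ k ∧ j ≠ l ∧ k ≠ l then t else 0) =
      t - ((if i = j then t else 0) + (if i = k then t else 0) + (if i = l then t else 0)
          + (if j = k then t else 0) + (if j = l then t else 0) + (if k = l then t else 0))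
        + ((if i = j ∧ k = l then t else 0) + (if i = k ∧ j = l then t else 0)
          + (if i = l ∧ j = k then t else 0))
        + 2 * ((if i = j ∧ j = k then t else 0) + (if i = j ∧ j = l then t else 0)
          + (if i = k ∧ k = l then t else 0) + (if j = k ∧ k = l then t else 0))
        - 6 * (if i = j ∧ j = k ∧ k = l then t else 0) := by
  by_cases h1 : i = j <;> by_cases h2 : i = k <;> by_cases h3 : i = l <;>
    by_cases h4 : j = k <;> by_cases h5 : j = l <;> by_cases h6 : k = l <;>
    simp_all <;> ring

theorem sum_pairwise_ne_four_eq_of_rotate {ι R : Type*} [Fintype ι] [DecidableEq ι]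
    [CommRing R] (f : ι → ι → ι → ι → R) (hf : ∀ i j k l, f i j k l = f l i j k) :
    ∑ i, ∑ j, ∑ k, ∑ l,
        (if i ≠ j ∧ i ≠ k ∧ i ≠ l ∧ j ≠ k ∧ j ≠ l ∧ k ≠ l then f i j k l else 0) =
      ∑ i, ∑ j, ∑ k, ∑ l, f i j k l - 4 * ∑ i, ∑ k, ∑ l, f i i k l
        - 2 * ∑ i, ∑ j, ∑ l, f i j i l + 2 * ∑ i, ∑ k, f i i k k + ∑ i, ∑ j, f i j i j
        + 8 * ∑ i, ∑ l, f i i i l - 6 * ∑ i, f i i i i := by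
  simp only [ite_pairwise_ne_four_eq]
  simp only [Finset.sum_sub_distrib, Finset.sum_add_distrib, ← Finset.mul_sum, ite_and,
    Finset.sum_ite_irrel, Finset.sum_ite_eq, Finset.mem_univ, if_true, Finset.sum_const_zero]
  have h₁ : ∑ i, ∑ j, ∑ k, f i j k i = ∑ i, ∑ j, ∑ k, f i i j k := by
    congr! 3 with i _ j _ k _; exact hf ..
  have h₂ : ∑ i, ∑ j, ∑ k, f i j j k = ∑ i, ∑ j, ∑ k, f i i j k :=
    calc _ = ∑ i, ∑ j, ∑ k, f k i i j := (Fintype.sum_sum_sum_rotate fun a b c => f a b b c).symm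
      _ = _ := by congr! 3 with i _ j _ k _; exact (hf ..).symm
  have h₃ : ∑ i, ∑ j, ∑ k, f i j k j = ∑ i, ∑ j, ∑ k, f i j i k :=
    calc _ = ∑ i, ∑ j, ∑ k, f j i j k := by congr! 3 with i _ j _ k _; exact hf ..
      _ = _ := Finset.sum_comm
  have h₄ : ∑ i, ∑ j, ∑ k, f i j k k = ∑ i, ∑ j, ∑ k, f i i j k :=
    calc _ = ∑ i, ∑ j, ∑ k, f j k i i := Fintype.sum_sum_sum_rotate fun a b c => f b c a a
      _ = _ := by congr! 3 with i _ j _ k _; exact ((hf ..).trans (hf ..)).symm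
  have h₅ : ∑ i, ∑ j, f i j j i = ∑ i, ∑ j, f i i j j := by
    congr! 2 with i _ j _; exact hf ..
  have h₆ : ∑ i, ∑ j, f i i j i = ∑ i, ∑ j, f i i i j := by
    congr! 2 with i _ j _; exact hf ..
  have h₇ : ∑ i, ∑ j, f i j i i = ∑ i, ∑ j, f i i i j := by
    congr! 2 with i _ j _; exact (hf ..).trans (hf ..)
  have h₈ : ∑ i, ∑ j, f i j j j = ∑ i, ∑ j, f i i i j :=
    calc _ = ∑ i, ∑ j, f j j j i := by
          congr! 2 with i _ j _; exact ((hf ..).trans (hf ..)).trans (hf ..)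
      _ = _ := Finset.sum_comm
  rw [h₁, h₂, h₃, h₄, h₅, h₆, h₇, h₈]
  ring

theorem natCast_smul_inv_natCast_smul_sum {K M : Type*} [DivisionRing K] [CharZero K]
    [AddCommGroup M] [Module K M] {n : ℕ} (v : Fin n → M) :
    (n : K) • ((n : K)⁻¹ • ∑ i, v i) = ∑ i, v i := by
  rcases n.eq_zero_or_pos with rfl | hn
  · simp
  · exact smul_inv_smul₀ (Nat.cast_ne_zero.mpr hn.ne') _

namespace Matrix

variable {m : Type*} [Fintype m]

theorem natCast_pow_mul_trace_mean_pow {K : Type*} [Field K] [CharZero K] [DecidableEq m]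
    {n : ℕ} (A : Fin n → Matrix m m K) (k : ℕ) :
    (n : K) ^ k * (((n : K)⁻¹ • ∑ i, A i) ^ k).trace = ((∑ i, A i) ^ k).trace := by
  rw [← smul_eq_mul, ← trace_smul, ← smul_pow, natCast_smul_inv_natCast_smul_sum]

theorem sum_pairwise_ne_trace_mul_eq {ι R : Type*} [Fintype ι] [DecidableEq ι] [DecidableEq m]
    [CommRing R] (A : ι → Matrix m m R) :
    ∑ i, ∑ j, ∑ k, ∑ l, (if i ≠ j ∧ i ≠ k ∧ i ≠ l ∧ j ≠ k ∧ j ≠ l ∧ k ≠ l then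
        (A i * A j * A k * A l).trace else 0) =
      ((∑ i, A i) ^ 4).trace - 4 * ∑ i, (A i ^ 2 * (∑ i, A i) ^ 2).trace
        - 2 * ∑ i, (A i * (∑ i, A i) * A i * (∑ i, A i)).trace
        + 2 * ∑ i, ∑ j, (A i ^ 2 * A j ^ 2).trace + ∑ i, ∑ j, (A i * A j * A i * A j).trace
        + 8 * ∑ i, (A i ^ 3 * ∑ i, A i).trace - 6 * ∑ i, (A i ^ 4).trace := by
  rw [sum_pairwise_ne_four_eq_of_rotate _ fun i j k l => by
    rw [trace_mul_comm]; simp only [Matrix.mul_assoc]]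
  simp only [← trace_sum, ← Finset.mul_sum, ← Finset.sum_mul, pow_succ, pow_zero,
    Matrix.one_mul, Matrix.mul_assoc]

variable {l n : Type*} [Fintype l] [Fintype n]

theorem trace_mul_conjTranspose_self_eq_sum_sq (M : Matrix m n ℝ) :
    (M * Mᴴ).trace = ∑ i, ∑ j, M i j ^ 2 := by
  simp only [trace, diag_apply, mul_apply, conjTranspose_apply, star_trivial, sq]

theorem trace_mul_mul_conjTranspose_le (M : Matrix l m ℝ) (N : Matrix m n ℝ) :
    (M * N * (M * N)ᴴ).trace ≤ (M * Mᴴ).trace * (N * Nᴴ).trace := by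
  rw [trace_mul_conjTranspose_self_eq_sum_sq, trace_mul_conjTranspose_self_eq_sum_sq,
    trace_mul_conjTranspose_self_eq_sum_sq, Finset.sum_comm (f := fun j k => N j k ^ 2),
    Finset.sum_mul_sum]
  gcongr with i _ k _
  simpa only [mul_apply] using Finset.sum_mul_sq_le_sq_mul_sq Finset.univ (M i ·) (N · k)

theorem two_mul_trace_conjTranspose_mul_le (X Y : Matrix m n ℝ) :
    2 * (Xᴴ * Y).trace ≤ (Xᴴ * X).trace + (Yᴴ * Y).trace := by
  have h := (posSemidef_conjTranspose_mul_self (X - Y)).trace_nonneg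
  have hYX : (Yᴴ * X).trace = (Xᴴ * Y).trace := by
    rw [← trace_transpose, transpose_mul, conjTranspose_eq_transpose_of_trivial,
      conjTranspose_eq_transpose_of_trivial, transpose_transpose]
  simp only [conjTranspose_sub, Matrix.sub_mul, Matrix.mul_sub, trace_sub] at h
  linarith

theorem trace_mul_self_le_trace_mul_conjTranspose (M : Matrix m m ℝ) :
    (M * M).trace ≤ (M * Mᴴ).trace := by
  have h := two_mul_trace_conjTranspose_mul_le Mᴴ M
  rw [conjTranspose_conjTranspose, trace_mul_comm Mᴴ M] at h
  linarith

open scoped MatrixOrder in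
theorem PosSemidef.trace_mul_nonneg {X Y : Matrix m m ℝ} (hX : X.PosSemidef)
    (hY : Y.PosSemidef) : 0 ≤ (X * Y).trace := by
  classical
  obtain ⟨P, rfl⟩ := CStarAlgebra.nonneg_iff_eq_star_mul_self.mp hX.nonneg
  rw [star_eq_conjTranspose, Matrix.mul_assoc, trace_mul_comm]
  exact (hY.mul_mul_conjTranspose_same P).trace_nonneg

variable [DecidableEq m] {X Y : Matrix m m ℝ}

theorem IsHermitian.trace_sq_nonneg (hX : X.IsHermitian) : 0 ≤ (X ^ 2).trace := by
  simpa only [sq, hX.eq] using (posSemidef_self_mul_conjTranspose X).trace_nonneg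

theorem IsHermitian.trace_sq_mul_sq_eq (hX : X.IsHermitian) (hY : Y.IsHermitian) :
    (X ^ 2 * Y ^ 2).trace = (X * Y * (X * Y)ᴴ).trace := by
  rw [conjTranspose_mul, hX.eq, hY.eq]
  simpa only [sq, Matrix.mul_assoc] using (trace_mul_comm (X * Y * Y) X).symm

theorem IsHermitian.abs_trace_sq_mul_sq_le (hX : X.IsHermitian) (hY : Y.IsHermitian) :
    |(X ^ 2 * Y ^ 2).trace| ≤ (X ^ 2).trace * (Y ^ 2).trace := by
  have h := trace_mul_mul_conjTranspose_le X Y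
  rw [hX.eq, hY.eq, ← sq X, ← sq Y] at h
  rwa [hX.trace_sq_mul_sq_eq hY, abs_of_nonneg (posSemidef_self_mul_conjTranspose _).trace_nonneg]

theorem IsHermitian.abs_trace_pow_four_le (hX : X.IsHermitian) :
    |(X ^ 4).trace| ≤ (X ^ 2).trace ^ 2 := by
  rw [show X ^ 4 = X ^ 2 * X ^ 2 by rw [← pow_add], sq (X ^ 2).trace]
  exact hX.abs_trace_sq_mul_sq_le hX

theorem IsHermitian.trace_mul_mul_mul_le (hX : X.IsHermitian) (hY : Y.IsHermitian) :
    (X * Y * X * Y).trace ≤ (X ^ 2 * Y ^ 2).trace := by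
  rw [hX.trace_sq_mul_sq_eq hY, Matrix.mul_assoc (X * Y)]
  exact trace_mul_self_le_trace_mul_conjTranspose (X * Y)

theorem IsHermitian.two_mul_trace_pow_three_mul_le (hX : X.IsHermitian) (hY : Y.IsHermitian) :
    2 * (X ^ 3 * Y).trace ≤ (X ^ 4).trace + (X ^ 2 * Y ^ 2).trace := by
  have h := two_mul_trace_conjTranspose_mul_le (X ^ 2) (X * Y)
  have e₁ : (X ^ 2)ᴴ * (X * Y) = X ^ 3 * Y := by
    rw [(hX.pow 2).eq, ← Matrix.mul_assoc, ← pow_succ]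
  have e₂ : (X ^ 2)ᴴ * X ^ 2 = X ^ 4 := by rw [(hX.pow 2).eq, ← pow_add]
  rwa [e₁, e₂, trace_mul_comm (X * Y)ᴴ, ← hX.trace_sq_mul_sq_eq hY] at h

theorem PosSemidef.abs_trace_mul_mul_mul_le (hX : X.PosSemidef) (hY : Y.PosSemidef) :
    |(X * Y * X * Y).trace| ≤ (X ^ 2).trace * (Y ^ 2).trace := by
  have h₀ : 0 ≤ (X * Y * X * Y).trace := by
    simpa only [hX.isHermitian.eq] using (hY.conjTranspose_mul_mul_same X).trace_mul_nonneg hY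
  rw [abs_of_nonneg h₀]
  exact (hX.isHermitian.trace_mul_mul_mul_le hY.isHermitian).trans
    ((le_abs_self _).trans (hX.isHermitian.abs_trace_sq_mul_sq_le hY.isHermitian))

theorem PosSemidef.abs_trace_pow_three_mul_le (hX : X.PosSemidef) (hY : Y.PosSemidef) :
    |(X ^ 3 * Y).trace| ≤ ((X ^ 2).trace ^ 2 + (X ^ 2).trace * (Y ^ 2).trace) / 2 := by
  rw [abs_of_nonneg ((hX.pow 3).trace_mul_nonneg hY)]
  have h := hX.isHermitian.two_mul_trace_pow_three_mul_le hY.isHermitian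
  have h₄ := (le_abs_self _).trans hX.isHermitian.abs_trace_pow_four_le
  have h₂₂ := (le_abs_self _).trans (hX.isHermitian.abs_trace_sq_mul_sq_le hY.isHermitian)
  linarith

section Family

variable {ι : Type*} [Fintype ι] {A : ι → Matrix m m ℝ}

theorem abs_sum_trace_sq_mul_sq_le (hA : ∀ i, (A i).IsHermitian) (hY : Y.IsHermitian) :
    |∑ i, (A i ^ 2 * Y ^ 2).trace| ≤ (∑ i, (A i ^ 2).trace) * (Y ^ 2).trace := by
  rw [Finset.sum_mul]
  exact (Finset.abs_sum_le_sum_abs _ _).trans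
    (Finset.sum_le_sum fun i _ => (hA i).abs_trace_sq_mul_sq_le hY)

theorem abs_sum_trace_mul_mul_mul_le (hA : ∀ i, (A i).PosSemidef) (hY : Y.PosSemidef) :
    |∑ i, (A i * Y * A i * Y).trace| ≤ (∑ i, (A i ^ 2).trace) * (Y ^ 2).trace := by
  rw [Finset.sum_mul]
  exact (Finset.abs_sum_le_sum_abs _ _).trans
    (Finset.sum_le_sum fun i _ => (hA i).abs_trace_mul_mul_mul_le hY)

theorem abs_sum_sum_trace_sq_mul_sq_le (hA : ∀ i, (A i).IsHermitian) :
    |∑ i, ∑ j, (A i ^ 2 * A j ^ 2).trace| ≤ (∑ i, (A i ^ 2).trace) ^ 2 := by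
  rw [Finset.sum_comm, sq, Finset.mul_sum]
  exact (Finset.abs_sum_le_sum_abs _ _).trans
    (Finset.sum_le_sum fun j _ => abs_sum_trace_sq_mul_sq_le hA (hA j))

theorem abs_sum_sum_trace_mul_mul_mul_le (hA : ∀ i, (A i).PosSemidef) :
    |∑ i, ∑ j, (A i * A j * A i * A j).trace| ≤ (∑ i, (A i ^ 2).trace) ^ 2 := by
  rw [Finset.sum_comm, sq, Finset.mul_sum]
  exact (Finset.abs_sum_le_sum_abs _ _).trans
    (Finset.sum_le_sum fun j _ => abs_sum_trace_mul_mul_mul_le hA (hA j))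

theorem sum_trace_sq_sq_le (hA : ∀ i, (A i).IsHermitian) :
    ∑ i, (A i ^ 2).trace ^ 2 ≤ (∑ i, (A i ^ 2).trace) ^ 2 :=
  Finset.sum_sq_le_sq_sum_of_nonneg fun i _ => (hA i).trace_sq_nonneg

theorem abs_sum_trace_pow_four_le (hA : ∀ i, (A i).IsHermitian) :
    |∑ i, (A i ^ 4).trace| ≤ (∑ i, (A i ^ 2).trace) ^ 2 :=
  (Finset.abs_sum_le_sum_abs _ _).trans
    ((Finset.sum_le_sum fun i _ => (hA i).abs_trace_pow_four_le).trans (sum_trace_sq_sq_le hA))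

theorem abs_sum_trace_pow_three_mul_le (hA : ∀ i, (A i).PosSemidef) (hY : Y.PosSemidef) :
    |∑ i, (A i ^ 3 * Y).trace| ≤
      ((∑ i, (A i ^ 2).trace) ^ 2 + (∑ i, (A i ^ 2).trace) * (Y ^ 2).trace) / 2 := by
  calc |∑ i, (A i ^ 3 * Y).trace|
      ≤ ∑ i, ((A i ^ 2).trace ^ 2 + (A i ^ 2).trace * (Y ^ 2).trace) / 2 :=
        (Finset.abs_sum_le_sum_abs _ _).trans
          (Finset.sum_le_sum fun i _ => (hA i).abs_trace_pow_three_mul_le hY)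
    _ ≤ _ := by
        rw [← Finset.sum_div, Finset.sum_add_distrib, ← Finset.sum_mul]
        gcongr
        exact sum_trace_sq_sq_le fun i => (hA i).isHermitian

end Family

end Matrix

open Matrix in
theorem abs_sum_trace_distinct_quadruples_le_general
    {n p : ℕ} (A : Fin n → Matrix (Fin p) (Fin p) ℝ)
    (hA : ∀ i, (A i).PosSemidef) :
    |∑ i : Fin n, ∑ j : Fin n, ∑ k : Fin n, ∑ l : Fin n,
        (if i ≠ j ∧ i ≠ k ∧ i ≠ l ∧ j ≠ k ∧ j ≠ l ∧ k ≠ l then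
          (A i * A j * A k * A l).trace else 0)| ≤
      (n : ℝ) ^ 4 * ((((n : ℝ)⁻¹ • ∑ i : Fin n, A i) ^ 4).trace)
        + 10 * (n : ℝ) ^ 2 * ((((n : ℝ)⁻¹ • ∑ i : Fin n, A i) ^ 2).trace)
            * ∑ i : Fin n, ((A i ^ 2).trace)
        + 13 * (∑ i : Fin n, ((A i ^ 2).trace)) ^ 2 := by
  have hS : (∑ i, A i).PosSemidef := posSemidef_sum _ fun i _ => hA i
  have hH : ∀ i, (A i).IsHermitian := fun i => (hA i).isHermitian
  rw [sum_pairwise_ne_trace_mul_eq, natCast_pow_mul_trace_mean_pow, mul_assoc 10,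
    natCast_pow_mul_trace_mean_pow]
  have hT := (hS.pow 4).trace_nonneg
  obtain ⟨hP₁, hP₂⟩ := abs_le.mp (abs_sum_trace_sq_mul_sq_le hH hS.isHermitian)
  obtain ⟨hC₁, hC₂⟩ := abs_le.mp (abs_sum_trace_mul_mul_mul_le hA hS)
  obtain ⟨hD₁, hD₂⟩ := abs_le.mp (abs_sum_sum_trace_sq_mul_sq_le hH)
  obtain ⟨hE₁, hE₂⟩ := abs_le.mp (abs_sum_sum_trace_mul_mul_mul_le hA)
  obtain ⟨hR₁, hR₂⟩ := abs_le.mp (abs_sum_trace_pow_three_mul_le hA hS)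
  obtain ⟨hU₁, hU₂⟩ := abs_le.mp (abs_sum_trace_pow_four_le hH)
  rw [abs_le]
  constructor <;> linarith

/-- For positive semi-definite `p×p` matrices `A₁,…,A_n` with average `Ā`, the sum of
`tr(AᵢAⱼA_kA_ℓ)` over ordered quadruples of pairwise distinct indices is bounded in
absolute value by `n⁴ tr(Ā⁴) + 10 n² tr(Ā²) Σᵢ tr(Aᵢ²) + 13 (Σᵢ tr(Aᵢ²))²`. -/
theorem abs_sum_trace_distinct_quadruples_le
    {n p : ℕ} (hn : 0 < n) (A : Fin n → Matrix (Fin p) (Fin p) ℝ)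
    (hA : ∀ i, (A i).PosSemidef) :
    |∑ i : Fin n, ∑ j : Fin n, ∑ k : Fin n, ∑ l : Fin n,
        (if i ≠ j ∧ i ≠ k ∧ i ≠ l ∧ j ≠ k ∧ j ≠ l ∧ k ≠ l then
          (A i * A j * A k * A l).trace else 0)| ≤
      (n : ℝ) ^ 4 * ((((n : ℝ)⁻¹ • ∑ i : Fin n, A i) ^ 4).trace)
        + 10 * (n : ℝ) ^ 2 * ((((n : ℝ)⁻¹ • ∑ i : Fin n, A i) ^ 2).trace)
            * ∑ i : Fin n, ((A i ^ 2).trace)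
        + 13 * (∑ i : Fin n, ((A i ^ 2).trace)) ^ 2 :=
  abs_sum_trace_distinct_quadruples_le_general A hA
end

section
/- Let A₁,…,A_{n₁} and B₁,…,B_{n₂} be p×p positive semi-definite matrices with averages Ā and B̄. Then |Σ_{i≠j, k≠ℓ} tr(Aᵢ B_k Aⱼ B_ℓ)| ≤ (1/2)n₂⁴ tr(Ā⁴) + (1/2)n₁⁴ tr(B̄⁴) + n₂² tr(B̄²) Σᵢ tr(Aᵢ²) + n₁² tr(Ā²) Σᵢ tr(Bᵢ²) + (Σᵢ tr(Aᵢ²))(Σᵢ tr(Bᵢ²)). -/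
open Matrix Finset

section helpers
variable {p : ℕ}

lemma cyc' (a b c d : Matrix (Fin p) (Fin p) ℝ) : (a*b*c*d).trace = (d*a*b*c).trace := by
  rw [Matrix.trace_mul_comm (a*b*c) d]
  congr 1
  noncomm_ring

lemma trace_sq_entry' (M : Matrix (Fin p) (Fin p) ℝ) :
    (Mᵀ*M).trace = ∑ a : Fin p, ∑ b : Fin p, (M a b)^2 := by
  simp [Matrix.trace, Matrix.mul_apply, Matrix.diag, sq]
  exact Finset.sum_comm

lemma trace_transpose_mul_nonneg' (M : Matrix (Fin p) (Fin p) ℝ) : 0 ≤ (Mᵀ*M).trace := by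
  rw [trace_sq_entry']
  positivity

lemma gram_trace_le' (M N : Matrix (Fin p) (Fin p) ℝ) :
    (Mᵀ*M*(Nᵀ*N)).trace ≤ (Mᵀ*M).trace * (Nᵀ*N).trace := by
  have h1 : (Mᵀ*M*(Nᵀ*N)).trace = ((M*Nᵀ)ᵀ*(M*Nᵀ)).trace := by
    rw [show Mᵀ*M*(Nᵀ*N) = Mᵀ*M*Nᵀ*N by noncomm_ring, cyc']
    congr 1
    rw [transpose_mul, transpose_transpose]
    noncomm_ring
  rw [h1, trace_sq_entry', trace_sq_entry', trace_sq_entry']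
  calc ∑ a : Fin p, ∑ b : Fin p, ((M*Nᵀ) a b)^2
      ≤ ∑ a : Fin p, ∑ b : Fin p, (∑ c : Fin p, (M a c)^2) * (∑ c : Fin p, (N b c)^2) := by
        refine Finset.sum_le_sum fun a _ => Finset.sum_le_sum fun b _ => ?_
        rw [Matrix.mul_apply]
        simpa [transpose_apply] using
          Finset.sum_mul_sq_le_sq_mul_sq Finset.univ (fun c => M a c) (fun c => N b c)
    _ = (∑ a : Fin p, ∑ b : Fin p, (M a b)^2) * (∑ a : Fin p, ∑ b : Fin p, (N a b)^2) := by
        simp_rw [← Finset.mul_sum]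
        rw [← Finset.sum_mul]

lemma trace_mul_entry' (X Y : Matrix (Fin p) (Fin p) ℝ) (hY : Yᵀ = Y) :
    (X*Y).trace = ∑ x : Fin p × Fin p, X x.1 x.2 * Y x.1 x.2 := by
  rw [Matrix.trace, Fintype.sum_prod_type]
  simp only [Matrix.diag, Matrix.mul_apply]
  exact Finset.sum_congr rfl fun a _ => Finset.sum_congr rfl fun b _ => by
    rw [Matrix.IsSymm.apply hY]

lemma sym_CS' (U V : Matrix (Fin p) (Fin p) ℝ) (hU : Uᵀ = U) (hV : Vᵀ = V) :
    (U*V).trace^2 ≤ (U*U).trace * (V*V).trace := by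
  rw [trace_mul_entry' U V hV, trace_mul_entry' U U hU, trace_mul_entry' V V hV]
  simpa [sq] using Finset.sum_mul_sq_le_sq_mul_sq Finset.univ
    (fun x : Fin p × Fin p => U x.1 x.2) (fun x => V x.1 x.2)

lemma abs_trace4_le' (X Y : Matrix (Fin p) (Fin p) ℝ) (hX : Xᵀ = X) (hY : Yᵀ = Y) :
    |(X*Y*X*Y).trace| ≤ (X*X*(Y*Y)).trace := by
  have hC := trace_transpose_mul_nonneg' (X*Y - Y*X)
  have hD := trace_transpose_mul_nonneg' (X*Y + Y*X)
  have hCt : (X*Y - Y*X)ᵀ = Y*X - X*Y := by simp [transpose_mul, hX, hY]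
  have hDt : (X*Y + Y*X)ᵀ = Y*X + X*Y := by simp [transpose_mul, hX, hY]
  rw [hCt] at hC; rw [hDt] at hD
  have e1 : (Y*X - X*Y) * (X*Y - Y*X) = Y*X*X*Y - Y*X*Y*X - X*Y*X*Y + X*Y*Y*X := by noncomm_ring
  have e2 : (Y*X + X*Y) * (X*Y + Y*X) = Y*X*X*Y + Y*X*Y*X + X*Y*X*Y + X*Y*Y*X := by noncomm_ring
  rw [e1] at hC; rw [e2] at hD
  simp only [trace_sub, trace_add] at hC hD
  have c1 : (Y*X*X*Y).trace = (X*X*(Y*Y)).trace := by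
    rw [cyc' Y X X Y, cyc' Y Y X X, cyc' X Y Y X]; congr 1; noncomm_ring
  have c2 : (X*Y*Y*X).trace = (X*X*(Y*Y)).trace := by
    rw [cyc' X Y Y X]; congr 1; noncomm_ring
  have c3 : (Y*X*Y*X).trace = (X*Y*X*Y).trace := by rw [cyc' Y X Y X]
  rw [abs_le]
  constructor <;> linarith

lemma amgm_scalar (q x y : ℝ) (hx : 0 ≤ x) (hy : 0 ≤ y) (hq : q^2 ≤ x*y) :
    q ≤ (x + y)/2 := by
  nlinarith [sq_nonneg (x - y), sq_nonneg (x + y - 2*q)]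

end helpers

/-- For positive semi-definite `p×p` matrices `A₁,…,A_{n₁}`, `B₁,…,B_{n₂}` with averages
`Ā`, `B̄`, the sum of `tr(Aᵢ B_k Aⱼ B_ℓ)` over `i ≠ j`, `k ≠ ℓ` is bounded in absolute
value by `(1/2)n₂⁴ tr(Ā⁴) + (1/2)n₁⁴ tr(B̄⁴) + n₂² tr(B̄²) Σᵢ tr(Aᵢ²)
+ n₁² tr(Ā²) Σᵢ tr(Bᵢ²) + (Σᵢ tr(Aᵢ²))(Σᵢ tr(Bᵢ²))`. -/
theorem abs_sum_trace_two_family_le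
    {n₁ n₂ p : ℕ} (hn₁ : 0 < n₁) (hn₂ : 0 < n₂)
    (A : Fin n₁ → Matrix (Fin p) (Fin p) ℝ)
    (B : Fin n₂ → Matrix (Fin p) (Fin p) ℝ)
    (hA : ∀ i, (A i).PosSemidef) (hB : ∀ i, (B i).PosSemidef) :
    |∑ i : Fin n₁, ∑ j : Fin n₁, ∑ k : Fin n₂, ∑ l : Fin n₂,
        (if i ≠ j ∧ k ≠ l then (A i * B k * A j * B l).trace else 0)| ≤
      (1 / 2) * (n₂ : ℝ) ^ 4 * ((((n₁ : ℝ)⁻¹ • ∑ i : Fin n₁, A i) ^ 4).trace)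
        + (1 / 2) * (n₁ : ℝ) ^ 4 * ((((n₂ : ℝ)⁻¹ • ∑ i : Fin n₂, B i) ^ 4).trace)
        + (n₂ : ℝ) ^ 2 * ((((n₂ : ℝ)⁻¹ • ∑ i : Fin n₂, B i) ^ 2).trace)
            * ∑ i : Fin n₁, ((A i ^ 2).trace)
        + (n₁ : ℝ) ^ 2 * ((((n₁ : ℝ)⁻¹ • ∑ i : Fin n₁, A i) ^ 2).trace)
            * ∑ i : Fin n₂, ((B i ^ 2).trace)
        + (∑ i : Fin n₁, ((A i ^ 2).trace)) * (∑ i : Fin n₂, ((B i ^ 2).trace)) := by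
  set SA := ∑ i : Fin n₁, A i with hSA
  set SB := ∑ i : Fin n₂, B i with hSB
  have hsA : ∀ i, (A i)ᵀ = A i := fun i => by
    rw [← conjTranspose_eq_transpose_of_trivial]; exact (hA i).1
  have hsB : ∀ k, (B k)ᵀ = B k := fun k => by
    rw [← conjTranspose_eq_transpose_of_trivial]; exact (hB k).1
  have hsSA : SAᵀ = SA := by simp [hSA, transpose_sum, hsA]
  have hsSB : SBᵀ = SB := by simp [hSB, transpose_sum, hsB]
  -- sum collapsing lemmas
  have E2 : ∀ (X Z : Matrix (Fin p) (Fin p) ℝ),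
      (∑ k : Fin n₂, ∑ l : Fin n₂, (X * B k * Z * B l).trace) = (X * SB * Z * SB).trace := by
    intro X Z
    have hm : ∑ k : Fin n₂, ∑ l : Fin n₂, X * B k * Z * B l = X * SB * Z * SB := by
      simp only [hSB, Finset.mul_sum, Finset.sum_mul]
      exact Finset.sum_comm
    rw [← hm]
    simp only [Matrix.trace_sum]
  have E3 : ∀ (Y W : Matrix (Fin p) (Fin p) ℝ),
      (∑ i : Fin n₁, ∑ j : Fin n₁, (A i * Y * A j * W).trace) = (SA * Y * SA * W).trace := by
    intro Y W
    have hm : ∑ i : Fin n₁, ∑ j : Fin n₁, A i * Y * A j * W = SA * Y * SA * W := by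
      simp only [hSA, Finset.mul_sum, Finset.sum_mul]
      exact Finset.sum_comm
    rw [← hm]
    simp only [Matrix.trace_sum]
  -- decomposition
  have decomp : (∑ i : Fin n₁, ∑ j : Fin n₁, ∑ k : Fin n₂, ∑ l : Fin n₂,
        (if i ≠ j ∧ k ≠ l then (A i * B k * A j * B l).trace else 0))
      = (SA*SB*SA*SB).trace
        - (∑ i : Fin n₁, (A i*SB*(A i)*SB).trace)
        - (∑ k : Fin n₂, (SA*B k*SA*(B k)).trace)
        + ∑ i : Fin n₁, ∑ k : Fin n₂, (A i*B k*A i*(B k)).trace := by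
    have key : ∀ (i j : Fin n₁) (k l : Fin n₂),
        (if i ≠ j ∧ k ≠ l then (A i * B k * A j * B l).trace else 0)
        = (A i * B k * A j * B l).trace
          - (if i = j then (A i * B k * A j * B l).trace else 0)
          - (if k = l then (A i * B k * A j * B l).trace else 0)
          + (if i = j then (if k = l then (A i * B k * A j * B l).trace else 0) else 0) := by
      intro i j k l
      by_cases hij : i = j <;> by_cases hkl : k = l <;> simp [hij, hkl]
    simp only [key, Finset.sum_sub_distrib, Finset.sum_add_distrib]
    simp only [Finset.sum_ite_irrel, Finset.sum_const_zero, Finset.sum_ite_eq,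
      Finset.mem_univ, if_true]
    congr 1
    · congr 1
      · congr 1
        · -- full sum
          calc ∑ i : Fin n₁, ∑ j : Fin n₁, ∑ k : Fin n₂, ∑ l : Fin n₂,
                (A i * B k * A j * B l).trace
              = ∑ i : Fin n₁, ∑ j : Fin n₁, (A i * SB * A j * SB).trace := by
                exact Finset.sum_congr rfl fun i _ => Finset.sum_congr rfl fun j _ => E2 _ _
            _ = (SA*SB*SA*SB).trace := E3 _ _
        · exact Finset.sum_congr rfl fun i _ => E2 _ _
      · -- k=l collapsed sum : ∑ i ∑ j ∑ k tr(Ai Bk Aj Bk) = ∑ k tr(SA Bk SA Bk)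
        calc ∑ i : Fin n₁, ∑ j : Fin n₁, ∑ k : Fin n₂, (A i * B k * A j * B k).trace
            = ∑ i : Fin n₁, ∑ k : Fin n₂, ∑ j : Fin n₁, (A i * B k * A j * B k).trace :=
              Finset.sum_congr rfl fun i _ => Finset.sum_comm
          _ = ∑ k : Fin n₂, ∑ i : Fin n₁, ∑ j : Fin n₁, (A i * B k * A j * B k).trace :=
              Finset.sum_comm
          _ = ∑ k : Fin n₂, (SA*B k*SA*(B k)).trace :=
              Finset.sum_congr rfl fun k _ => E3 _ _
  rw [decomp]
  -- abbreviations for traces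
  set t1 := (SA*SB*SA*SB).trace with ht1
  -- bounds on each piece
  have hq1 : |t1| ≤ (SA*SA*(SB*SB)).trace := abs_trace4_le' SA SB hsSA hsSB
  have h2 : ∀ i, |(A i*SB*(A i)*SB).trace| ≤ (A i*A i).trace * (SB*SB).trace := by
    intro i
    refine le_trans (abs_trace4_le' (A i) SB (hsA i) hsSB) ?_
    have := gram_trace_le' (A i) SB
    rwa [hsA i, hsSB] at this
  have h3 : ∀ k, |(SA*B k*SA*(B k)).trace| ≤ (SA*SA).trace * (B k*B k).trace := by
    intro k
    refine le_trans (abs_trace4_le' SA (B k) hsSA (hsB k)) ?_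
    have := gram_trace_le' SA (B k)
    rwa [hsSA, hsB k] at this
  have h4 : ∀ (i : Fin n₁) (k : Fin n₂),
      |(A i*B k*A i*(B k)).trace| ≤ (A i*A i).trace * (B k*B k).trace := by
    intro i k
    refine le_trans (abs_trace4_le' (A i) (B k) (hsA i) (hsB k)) ?_
    have := gram_trace_le' (A i) (B k)
    rwa [hsA i, hsB k] at this
  -- the T-term bound
  have hu : 0 ≤ ((SA*SA)*(SA*SA)).trace := by
    have := trace_transpose_mul_nonneg' (SA*SA)
    rwa [show (SA*SA)ᵀ = SA*SA by rw [transpose_mul, hsSA]] at this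
  have hv : 0 ≤ ((SB*SB)*(SB*SB)).trace := by
    have := trace_transpose_mul_nonneg' (SB*SB)
    rwa [show (SB*SB)ᵀ = SB*SB by rw [transpose_mul, hsSB]] at this
  have hCS : ((SA*SA)*(SB*SB)).trace^2 ≤ ((SA*SA)*(SA*SA)).trace * ((SB*SB)*(SB*SB)).trace := by
    refine sym_CS' (SA*SA) (SB*SB) ?_ ?_ <;> simp [transpose_mul, hsSA, hsSB]
  have hn₁' : (0:ℝ) < (n₁:ℝ) := by exact_mod_cast hn₁
  have hn₂' : (0:ℝ) < (n₂:ℝ) := by exact_mod_cast hn₂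
  have hT : (SA*SA*(SB*SB)).trace ≤
      ((n₂:ℝ)^4 * ((n₁:ℝ)⁻¹)^4 * ((SA*SA)*(SA*SA)).trace
        + (n₁:ℝ)^4 * ((n₂:ℝ)⁻¹)^4 * ((SB*SB)*(SB*SB)).trace)/2 := by
    apply amgm_scalar
    · positivity
    · positivity
    · calc (SA*SA*(SB*SB)).trace^2 ≤ ((SA*SA)*(SA*SA)).trace * ((SB*SB)*(SB*SB)).trace := hCS
        _ = ((n₂:ℝ)^4 * ((n₁:ℝ)⁻¹)^4 * ((SA*SA)*(SA*SA)).trace)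
            * ((n₁:ℝ)^4 * ((n₂:ℝ)⁻¹)^4 * ((SB*SB)*(SB*SB)).trace) := by
            rw [mul_mul_mul_comm]
            rw [show (n₂:ℝ)^4 * ((n₁:ℝ)⁻¹)^4 * ((n₁:ℝ)^4 * ((n₂:ℝ)⁻¹)^4) = 1 by
              field_simp, one_mul]
  -- rewrite RHS traces
  have rSA4 : (((n₁ : ℝ)⁻¹ • SA) ^ 4).trace = ((n₁:ℝ)⁻¹)^4 * ((SA*SA)*(SA*SA)).trace := by
    rw [smul_pow, trace_smul, show SA^4 = (SA*SA)*(SA*SA) by noncomm_ring]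
    rfl
  have rSB4 : (((n₂ : ℝ)⁻¹ • SB) ^ 4).trace = ((n₂:ℝ)⁻¹)^4 * ((SB*SB)*(SB*SB)).trace := by
    rw [smul_pow, trace_smul, show SB^4 = (SB*SB)*(SB*SB) by noncomm_ring]
    rfl
  have rSA2 : (n₁:ℝ)^2 * (((n₁ : ℝ)⁻¹ • SA) ^ 2).trace = (SA*SA).trace := by
    rw [smul_pow, trace_smul, show SA^2 = SA*SA by noncomm_ring, smul_eq_mul]
    field_simp
  have rSB2 : (n₂:ℝ)^2 * (((n₂ : ℝ)⁻¹ • SB) ^ 2).trace = (SB*SB).trace := by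
    rw [smul_pow, trace_smul, show SB^2 = SB*SB by noncomm_ring, smul_eq_mul]
    field_simp
  have rA2 : ∀ i, (A i ^ 2).trace = (A i * A i).trace := fun i => by rw [sq]
  have rB2 : ∀ k, (B k ^ 2).trace = (B k * B k).trace := fun k => by rw [sq]
  -- assemble
  have habs : |t1 - (∑ i : Fin n₁, (A i*SB*(A i)*SB).trace)
        - (∑ k : Fin n₂, (SA*B k*SA*(B k)).trace)
        + ∑ i : Fin n₁, ∑ k : Fin n₂, (A i*B k*A i*(B k)).trace|
      ≤ |t1| + (∑ i : Fin n₁, |(A i*SB*(A i)*SB).trace|)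
        + (∑ k : Fin n₂, |(SA*B k*SA*(B k)).trace|)
        + ∑ i : Fin n₁, ∑ k : Fin n₂, |(A i*B k*A i*(B k)).trace| := by
    refine le_trans (abs_add_le _ _) (add_le_add (le_trans (abs_sub _ _) (add_le_add
      (le_trans (abs_sub _ _) (add_le_add le_rfl (Finset.abs_sum_le_sum_abs _ _)))
      (Finset.abs_sum_le_sum_abs _ _))) ?_)
    refine le_trans (Finset.abs_sum_le_sum_abs _ _) (Finset.sum_le_sum fun i _ =>
      Finset.abs_sum_le_sum_abs _ _)
  refine le_trans habs ?_
  have hb2 : (∑ i : Fin n₁, |(A i*SB*(A i)*SB).trace|)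
      ≤ (SB*SB).trace * ∑ i : Fin n₁, (A i * A i).trace := by
    rw [Finset.mul_sum]
    exact Finset.sum_le_sum fun i _ => le_trans (h2 i) (by ring_nf; exact le_rfl)
  have hb3 : (∑ k : Fin n₂, |(SA*B k*SA*(B k)).trace|)
      ≤ (SA*SA).trace * ∑ k : Fin n₂, (B k * B k).trace := by
    rw [Finset.mul_sum]
    exact Finset.sum_le_sum fun k _ => le_trans (h3 k) (by ring_nf; exact le_rfl)
  have hb4 : (∑ i : Fin n₁, ∑ k : Fin n₂, |(A i*B k*A i*(B k)).trace|)
      ≤ (∑ i : Fin n₁, (A i * A i).trace) * ∑ k : Fin n₂, (B k * B k).trace := by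
    rw [Finset.sum_mul]
    refine Finset.sum_le_sum fun i _ => ?_
    rw [Finset.mul_sum]
    exact Finset.sum_le_sum fun k _ => h4 i k
  have hb1 : |t1| ≤ (1 / 2) * (n₂ : ℝ) ^ 4 * (((n₁ : ℝ)⁻¹ • SA) ^ 4).trace
      + (1 / 2) * (n₁ : ℝ) ^ 4 * (((n₂ : ℝ)⁻¹ • SB) ^ 4).trace := by
    rw [rSA4, rSB4]
    refine le_trans hq1 (le_trans hT (le_of_eq ?_))
    ring
  simp only [rA2, rB2]
  have e3' : (n₂ : ℝ) ^ 2 * (((n₂ : ℝ)⁻¹ • SB) ^ 2).trace * ∑ i : Fin n₁, (A i * A i).trace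
      = (SB*SB).trace * ∑ i : Fin n₁, (A i * A i).trace := by rw [rSB2]
  have e4' : (n₁ : ℝ) ^ 2 * (((n₁ : ℝ)⁻¹ • SA) ^ 2).trace * ∑ k : Fin n₂, (B k * B k).trace
      = (SA*SA).trace * ∑ k : Fin n₂, (B k * B k).trace := by rw [rSA2]
  rw [e3', e4']
  linarith [hb1, hb2, hb3, hb4]
end

section
/- Lindeberg swapping step for quadratic forms: With the notation and assumptions of the universality theorem, fix k and define W_{k,0} as the part of the quadratic form not involving the k-th coordinate, W_k = W_{k,0} + Σ_{i<k} w_{i,k}(ηᵢ,ξ_k) + Σ_{j>k} w_{k,j}(ξ_k,ξⱼ) and W_{k+1} = W_{k,0} + Σ_{i<k} w_{i,k}(ηᵢ,η_k) + Σ_{j>k} w_{k,j}(η_k,ξⱼ). Then the first and second conditional moments of W_k − W_{k,0} and W_{k+1} − W_{k,0} given all variables except the k-th coincide, and hence for f ∈ C³_b, |E f(W_k) − E f(W_{k+1})| ≤ (sup|f^{(3)}|/6)(E|W_k − W_{k,0}|³ + E|W_{k+1} − W_{k,0}|³). -/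
open Finset MeasureTheory ProbabilityTheory

variable {Ω : Type*} [MeasurableSpace Ω] {𝒳 : Type*} [MeasurableSpace 𝒳]

/-- The family obtained by using `η i` for `i < k` and `ξ i` otherwise. -/
def lowerMix {n : ℕ} (ξ η : Fin n → Ω → 𝒳) (k : Fin n) : Fin n → Ω → 𝒳 :=
  fun i => if i < k then η i else ξ i

/-- `W_{k,0}`: the part of the quadratic form not involving the `k`-th coordinate, with
`η`'s in coordinates `< k` and `ξ`'s in coordinates `> k`. -/
def Wk0 {n : ℕ} (w : Fin n → Fin n → 𝒳 → 𝒳 → ℝ) (ξ η : Fin n → Ω → 𝒳) (k : Fin n)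
    (ω : Ω) : ℝ :=
  ∑ i : Fin n, ∑ j ∈ Finset.Ioi i,
    if i ≠ k ∧ j ≠ k then w i j (lowerMix ξ η k i ω) (lowerMix ξ η k j ω) else 0

/-- The increment `W_k − W_{k,0} = Σ_{i<k} w_{i,k}(ηᵢ,ξ_k) + Σ_{j>k} w_{k,j}(ξ_k,ξⱼ)`. -/
def incrXi {n : ℕ} (w : Fin n → Fin n → 𝒳 → 𝒳 → ℝ) (ξ η : Fin n → Ω → 𝒳) (k : Fin n)
    (ω : Ω) : ℝ :=
  ∑ i ∈ Finset.Iio k, w i k (η i ω) (ξ k ω) + ∑ j ∈ Finset.Ioi k, w k j (ξ k ω) (ξ j ω)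

/-- The increment `W_{k+1} − W_{k,0} = Σ_{i<k} w_{i,k}(ηᵢ,η_k) + Σ_{j>k} w_{k,j}(η_k,ξⱼ)`. -/
def incrEta {n : ℕ} (w : Fin n → Fin n → 𝒳 → 𝒳 → ℝ) (ξ η : Fin n → Ω → 𝒳) (k : Fin n)
    (ω : Ω) : ℝ :=
  ∑ i ∈ Finset.Iio k, w i k (η i ω) (η k ω) + ∑ j ∈ Finset.Ioi k, w k j (η k ω) (ξ j ω)

/-- The σ-algebra generated by all coordinates except the `k`-th one. -/
def exceptSigma {n : ℕ} (ξ η : Fin n → Ω → 𝒳) (k : Fin n) : MeasurableSpace Ω :=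
  MeasurableSpace.comap
    (fun ω => (fun i : {i : Fin n // i ≠ k} => lowerMix ξ η k (i : Fin n) ω))
    MeasurableSpace.pi

/-!
Let `R` collect the coordinates other than the `k`-th. Then `W_{k,0} = S(R)` and the two
increments are `H(R, ξ_k)` and `H(R, η_k)`, where `H(b, x)` is a sum of one kernel term per
coordinate `i ≠ k`, and both `ξ_k` and `η_k` are independent of `R`. Conditioning on `R` therefore
freezes `b = R`: the conditional moments of the increments are sums of unconditional moments of
single kernel terms, which agree by degeneracy (first moments) and by the matching conditions
(second moments). For the bound, condition on `R` once more and expand `f` to second order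
around `S(b)` on each fibre; the Taylor polynomials of the two sides have the same expectation,
and the Lagrange remainders are at most `sup|f'''|/6` times the third absolute moments.
-/

theorem memLp_of_integrable_abs_pow {α : Type*} [MeasurableSpace α] {ν : Measure α}
    {g : α → ℝ} {p : ℕ} (hp : p ≠ 0) (hg : AEStronglyMeasurable g ν)
    (h : Integrable (fun a => |g a| ^ p) ν) : MemLp g p ν := by
  rw [← integrable_norm_rpow_iff hg (by exact_mod_cast hp) (by simp)]
  simpa [Real.norm_eq_abs] using h

theorem sum_subtype_ne_eq_sum_Iio_add_sum_Ioi {α M : Type*} [LinearOrder α] [Fintype α]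
    [LocallyFiniteOrderBot α] [LocallyFiniteOrderTop α] [AddCommMonoid M] (k : α) (g : α → M) :
    ∑ i : {i // i ≠ k}, g i = ∑ i ∈ Iio k, g i + ∑ i ∈ Ioi k, g i := by
  rw [← Finset.sum_union (Finset.disjoint_left.2 fun i hi hi' =>
    lt_asymm (Finset.mem_Iio.1 hi) (Finset.mem_Ioi.1 hi'))]
  exact (Finset.sum_subtype _ (fun i => by simp [lt_or_lt_iff_ne]) g).symm

theorem ProbabilityTheory.iIndepFun.indepFun_pi_comp {μ : Measure Ω} {ι κ : Type*} [Fintype κ]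
    {F : ι → Ω → 𝒳} (hF : iIndepFun F μ) (hmeas : ∀ i, Measurable (F i)) {c : κ → ι} {j : ι}
    (hj : ∀ i, c i ≠ j) : IndepFun (fun ω i => F (c i) ω) (F j) μ := by
  classical
  have h := hF.indepFun_finset (Finset.univ.image c) {j}
    (Finset.disjoint_singleton_right.2 (by simpa using hj)) hmeas
  exact h.comp (φ := fun g i => g ⟨c i, Finset.mem_image_of_mem _ (Finset.mem_univ i)⟩)
    (ψ := fun g => g ⟨j, Finset.mem_singleton_self j⟩)
    (by fun_prop) (measurable_pi_apply _ : Measurable fun g : ({j} : Finset ι) → 𝒳 => g _)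

section Taylor

variable {f : ℝ → ℝ} {M : ℝ}

theorem abs_sub_taylor_two_le (hf : ContDiff ℝ 3 f) (hM : ∀ x, |iteratedDeriv 3 f x| ≤ M)
    (s u : ℝ) :
    |f (s + u) - (f s + deriv f s * u + iteratedDeriv 2 f s * u ^ 2 / 2)| ≤ M / 6 * |u| ^ 3 := by
  rcases eq_or_ne u 0 with rfl | hu
  · simp
  have hne : s ≠ s + u := by simpa [eq_comm] using hu
  obtain ⟨x, -, hx⟩ := taylor_mean_remainder_lagrange_iteratedDeriv (n := 2) hne hf.contDiffOn
  have hderiv : ∀ m ≤ 3, iteratedDerivWithin m f (Set.uIcc s (s + u)) s = iteratedDeriv m f s :=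
    fun m hm => iteratedDerivWithin_eq_iteratedDeriv (uniqueDiffOn_uIcc hne)
      ((hf.of_le (by exact_mod_cast hm)).contDiffAt) Set.left_mem_uIcc
  simp only [taylor_within_apply, Finset.sum_range_succ, Finset.sum_range_zero,
    hderiv 0 (by norm_num), hderiv 1 (by norm_num), hderiv 2 (by norm_num),
    iteratedDeriv_zero, iteratedDeriv_one, add_sub_cancel_left] at hx
  norm_num [Nat.factorial] at hx
  have hrem : f (s + u) - (f s + deriv f s * u + iteratedDeriv 2 f s * u ^ 2 / 2) =
      iteratedDeriv 3 f x * u ^ 3 / 6 := by linarith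
  rw [hrem, abs_div, abs_mul, abs_pow, abs_of_pos (by norm_num : (0 : ℝ) < 6)]
  nlinarith [hM x, pow_nonneg (abs_nonneg u) 3]

variable {α : Type*} [MeasurableSpace α] {ν : Measure α} [IsProbabilityMeasure ν]

theorem abs_integral_sub_taylor_two_le (hf : ContDiff ℝ 3 f)
    (hM : ∀ x, |iteratedDeriv 3 f x| ≤ M) {g : α → ℝ} (hg : MemLp g 3 ν) (s : ℝ) :
    |∫ a, f (s + g a) ∂ν -
        (f s + deriv f s * ∫ a, g a ∂ν + iteratedDeriv 2 f s * (∫ a, g a ^ 2 ∂ν) / 2)| ≤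
      M / 6 * ∫ a, |g a| ^ 3 ∂ν := by
  have hg1 : Integrable g ν := hg.integrable (by norm_num)
  have hg2 : Integrable (fun a => g a ^ 2) ν := (hg.mono_exponent (by norm_num)).integrable_sq
  have hg3 : Integrable (fun a => |g a| ^ 3) ν := by
    simpa only [Real.norm_eq_abs] using hg.integrable_norm_pow'
  set P : α → ℝ := fun a => f s + deriv f s * g a + iteratedDeriv 2 f s * g a ^ 2 / 2
  have hP₁ : Integrable (fun a => f s + deriv f s * g a) ν :=
    (integrable_const _).add (hg1.const_mul _)
  have hP₂ : Integrable (fun a => iteratedDeriv 2 f s * g a ^ 2 / 2) ν :=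
    (hg2.const_mul _).div_const _
  have hP : Integrable P ν := hP₁.add hP₂
  have hPint : ∫ a, P a ∂ν =
      f s + deriv f s * ∫ a, g a ∂ν + iteratedDeriv 2 f s * (∫ a, g a ^ 2 ∂ν) / 2 := by
    rw [integral_add hP₁ hP₂, integral_add (integrable_const _) (hg1.const_mul _),
      integral_const, integral_const_mul, integral_div, integral_const_mul]
    simp
  have hrem : ∀ a, |f (s + g a) - P a| ≤ M / 6 * |g a| ^ 3 :=
    fun a => abs_sub_taylor_two_le hf hM s (g a)
  have hremint : Integrable (fun a => f (s + g a) - P a) ν :=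
    (hg3.const_mul _).mono'
      ((hf.continuous.comp_aestronglyMeasurable (hg1.1.const_add s)).sub hP.1)
      (ae_of_all _ fun a => by simpa only [Real.norm_eq_abs] using hrem a)
  have hfg : Integrable (fun a => f (s + g a)) ν :=
    (hremint.add hP).congr (ae_of_all _ fun a => sub_add_cancel _ _)
  calc |∫ a, f (s + g a) ∂ν - _|
      = |∫ a, (f (s + g a) - P a) ∂ν| := by rw [integral_sub hfg hP, hPint]
    _ ≤ ∫ a, |f (s + g a) - P a| ∂ν := abs_integral_le_integral_abs
    _ ≤ ∫ a, M / 6 * |g a| ^ 3 ∂ν := integral_mono hremint.abs (hg3.const_mul _) hrem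
    _ = M / 6 * ∫ a, |g a| ^ 3 ∂ν := integral_const_mul _ _

theorem abs_integral_comp_add_sub_le_of_moments_eq (hf : ContDiff ℝ 3 f)
    (hM : ∀ x, |iteratedDeriv 3 f x| ≤ M) {g h : α → ℝ} (hg : MemLp g 3 ν) (hh : MemLp h 3 ν)
    (hmean : ∫ a, g a ∂ν = ∫ a, h a ∂ν) (hsq : ∫ a, g a ^ 2 ∂ν = ∫ a, h a ^ 2 ∂ν) (s : ℝ) :
    |∫ a, f (s + g a) ∂ν - ∫ a, f (s + h a) ∂ν| ≤
      M / 6 * (∫ a, |g a| ^ 3 ∂ν + ∫ a, |h a| ^ 3 ∂ν) := by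
  have hgT := abs_integral_sub_taylor_two_le hf hM hg s
  have hhT := abs_integral_sub_taylor_two_le hf hM hh s
  rw [hmean, hsq] at hgT
  set T := f s + deriv f s * ∫ a, h a ∂ν + iteratedDeriv 2 f s * (∫ a, h a ^ 2 ∂ν) / 2
  have := abs_sub_le (∫ a, f (s + g a) ∂ν) T (∫ a, f (s + h a) ∂ν)
  rw [abs_sub_comm T] at this
  linarith

end Taylor

section Freezing

variable {β : Type*} [MeasurableSpace β] {μ : Measure Ω} [IsProbabilityMeasure μ]
  {R : Ω → β} {X Y : Ω → 𝒳} {H : β → 𝒳 → ℝ}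

theorem condExp_comp_ae_eq_integral_of_indepFun [StandardBorelSpace 𝒳] [Nonempty 𝒳]
    (hR : Measurable R) (hX : Measurable X) (hRX : IndepFun R X μ)
    (hH : Measurable (Function.uncurry H)) (hint : Integrable (fun ω => H (R ω) (X ω)) μ) :
    μ[fun ω => H (R ω) (X ω) | MeasurableSpace.comap R inferInstance] =ᵐ[μ]
      fun ω => ∫ ω', H (R ω) (X ω') ∂μ := by
  have hlaw : condDistrib X R μ =ᵐ[μ.map R] Kernel.const β (μ.map X) :=
    condDistrib_ae_eq_of_measure_eq_compProd R hX.aemeasurable <| by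
      rw [Measure.compProd_const]
      exact (indepFun_iff_map_prod_eq_prod_map_map hR.aemeasurable hX.aemeasurable).1 hRX
  filter_upwards [condExp_prod_ae_eq_integral_condDistrib (f := Function.uncurry H) hR
    hX.aemeasurable hH.stronglyMeasurable hint, ae_of_ae_map hR.aemeasurable hlaw] with ω h h'
  simp only [Function.uncurry_apply_pair] at h
  rw [h, h', Kernel.const_apply]
  exact integral_map hX.aemeasurable (hH.of_uncurry_left).aestronglyMeasurable

theorem ae_integrable_comp_of_indepFun (hR : Measurable R) (hX : Measurable X)
    (hRX : IndepFun R X μ) (hH : Measurable (Function.uncurry H))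
    (hint : Integrable (fun ω => H (R ω) (X ω)) μ) :
    ∀ᵐ ω ∂μ, Integrable (fun ω' => H (R ω) (X ω')) μ := by
  have hprod : Integrable (Function.uncurry H) ((μ.map R).prod (μ.map X)) := by
    rw [← (indepFun_iff_map_prod_eq_prod_map_map hR.aemeasurable hX.aemeasurable).1 hRX,
      integrable_map_measure hH.aestronglyMeasurable (hR.prodMk hX).aemeasurable]
    exact hint
  filter_upwards [ae_of_ae_map hR.aemeasurable hprod.prod_right_ae] with ω h
  exact (integrable_map_measure hH.of_uncurry_left.aestronglyMeasurable
    hX.aemeasurable).1 h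

theorem ae_memLp_comp_of_indepFun (hR : Measurable R) (hX : Measurable X)
    (hRX : IndepFun R X μ) (hH : Measurable (Function.uncurry H)) {p : ℕ} (hp : p ≠ 0)
    (hHX : MemLp (fun ω => H (R ω) (X ω)) p μ) :
    ∀ᵐ ω ∂μ, MemLp (fun ω' => H (R ω) (X ω')) p μ := by
  filter_upwards [ae_integrable_comp_of_indepFun (H := fun b x => |H b x| ^ p) hR hX hRX
    (hH.abs.pow_const p) (by simpa only [Real.norm_eq_abs] using hHX.integrable_norm_pow hp)]
    with ω h
  exact memLp_of_integrable_abs_pow hp (hH.of_uncurry_left.comp hX).aestronglyMeasurable h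

theorem ae_integral_comp_eq_of_condExp_ae_eq [StandardBorelSpace 𝒳] [Nonempty 𝒳]
    (hR : Measurable R) (hX : Measurable X) (hY : Measurable Y)
    (hRX : IndepFun R X μ) (hRY : IndepFun R Y μ) (hH : Measurable (Function.uncurry H))
    (hintX : Integrable (fun ω => H (R ω) (X ω)) μ)
    (hintY : Integrable (fun ω => H (R ω) (Y ω)) μ)
    (hcond : μ[fun ω => H (R ω) (X ω) | MeasurableSpace.comap R inferInstance] =ᵐ[μ]
      μ[fun ω => H (R ω) (Y ω) | MeasurableSpace.comap R inferInstance]) :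
    ∀ᵐ ω ∂μ, ∫ ω', H (R ω) (X ω') ∂μ = ∫ ω', H (R ω) (Y ω') ∂μ :=
  (condExp_comp_ae_eq_integral_of_indepFun hR hX hRX hH hintX).symm.trans
    (hcond.trans (condExp_comp_ae_eq_integral_of_indepFun hR hY hRY hH hintY))

theorem condExp_comp_ae_eq_of_indepFun [StandardBorelSpace 𝒳] [Nonempty 𝒳]
    (hR : Measurable R) (hX : Measurable X) (hY : Measurable Y)
    (hRX : IndepFun R X μ) (hRY : IndepFun R Y μ) (hH : Measurable (Function.uncurry H))
    (hintX : Integrable (fun ω => H (R ω) (X ω)) μ)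
    (hintY : Integrable (fun ω => H (R ω) (Y ω)) μ)
    (hmoment : ∀ b, ∫ ω, H b (X ω) ∂μ = ∫ ω, H b (Y ω) ∂μ) :
    μ[fun ω => H (R ω) (X ω) | MeasurableSpace.comap R inferInstance] =ᵐ[μ]
      μ[fun ω => H (R ω) (Y ω) | MeasurableSpace.comap R inferInstance] := by
  filter_upwards [condExp_comp_ae_eq_integral_of_indepFun hR hX hRX hH hintX,
    condExp_comp_ae_eq_integral_of_indepFun hR hY hRY hH hintY] with ω hωX hωY
  rw [hωX, hωY, hmoment]

theorem integral_comp_eq_integral_integral_of_indepFun [StandardBorelSpace 𝒳] [Nonempty 𝒳]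
    (hR : Measurable R) (hX : Measurable X) (hRX : IndepFun R X μ)
    (hH : Measurable (Function.uncurry H)) (hint : Integrable (fun ω => H (R ω) (X ω)) μ) :
    Integrable (fun ω => ∫ ω', H (R ω) (X ω') ∂μ) μ ∧
      ∫ ω, H (R ω) (X ω) ∂μ = ∫ ω, ∫ ω', H (R ω) (X ω') ∂μ ∂μ := by
  have h := condExp_comp_ae_eq_integral_of_indepFun hR hX hRX hH hint
  exact ⟨integrable_condExp.congr h,
    (integral_condExp hR.comap_le).symm.trans (integral_congr_ae h)⟩

end Freezing

section Lindeberg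

variable {β : Type*} [MeasurableSpace β] {μ : Measure Ω} [IsProbabilityMeasure μ]
  {R : Ω → β} {X Y : Ω → 𝒳} [StandardBorelSpace 𝒳] [Nonempty 𝒳]

theorem condExp_sum_ae_eq_of_indepFun {ι : Type*} [Fintype ι] {T : ι → β → 𝒳 → ℝ}
    (hR : Measurable R) (hX : Measurable X) (hY : Measurable Y)
    (hRX : IndepFun R X μ) (hRY : IndepFun R Y μ) (hT : ∀ i, Measurable (Function.uncurry (T i)))
    (hTX : ∀ i, Integrable (fun ω => T i (R ω) (X ω)) μ)
    (hTY : ∀ i, Integrable (fun ω => T i (R ω) (Y ω)) μ)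
    (hmoment : ∀ i b, ∫ ω, T i b (X ω) ∂μ = ∫ ω, T i b (Y ω) ∂μ) :
    μ[fun ω => ∑ i, T i (R ω) (X ω) | MeasurableSpace.comap R inferInstance] =ᵐ[μ]
      μ[fun ω => ∑ i, T i (R ω) (Y ω) | MeasurableSpace.comap R inferInstance] := by
  have hsum : ∀ Z : Ω → 𝒳,
      (fun ω => ∑ i, T i (R ω) (Z ω)) = ∑ i, fun ω => T i (R ω) (Z ω) := fun Z => by
    ext ω; simp
  rw [hsum X, hsum Y]
  refine (condExp_finsetSum (fun i _ => hTX i) _).trans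
    ((eventuallyEq_sum fun i _ => ?_).trans (condExp_finsetSum (fun i _ => hTY i) _).symm)
  exact condExp_comp_ae_eq_of_indepFun hR hX hY hRX hRY (hT i) (hTX i) (hTY i) (hmoment i)

theorem condExp_sum_sq_ae_eq_of_indepFun {ι : Type*} [Fintype ι] {T : ι → β → 𝒳 → ℝ}
    (hR : Measurable R) (hX : Measurable X) (hY : Measurable Y)
    (hRX : IndepFun R X μ) (hRY : IndepFun R Y μ) (hT : ∀ i, Measurable (Function.uncurry (T i)))
    (hTX : ∀ i, MemLp (fun ω => T i (R ω) (X ω)) 2 μ)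
    (hTY : ∀ i, MemLp (fun ω => T i (R ω) (Y ω)) 2 μ)
    (hmoment : ∀ i j b,
      ∫ ω, T i b (X ω) * T j b (X ω) ∂μ = ∫ ω, T i b (Y ω) * T j b (Y ω) ∂μ) :
    μ[fun ω => (∑ i, T i (R ω) (X ω)) ^ 2 | MeasurableSpace.comap R inferInstance] =ᵐ[μ]
      μ[fun ω => (∑ i, T i (R ω) (Y ω)) ^ 2 | MeasurableSpace.comap R inferInstance] := by
  have hsq : ∀ Z : Ω → 𝒳, (fun ω => (∑ i, T i (R ω) (Z ω)) ^ 2) =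
      fun ω => ∑ p : ι × ι, T p.1 (R ω) (Z ω) * T p.2 (R ω) (Z ω) := fun Z => by
    ext ω; rw [sq, Fintype.sum_mul_sum, Fintype.sum_prod_type]
  rw [hsq X, hsq Y]
  exact condExp_sum_ae_eq_of_indepFun (T := fun (p : ι × ι) b x => T p.1 b x * T p.2 b x)
    hR hX hY hRX hRY (fun p => (hT p.1).mul (hT p.2)) (fun p => (hTX p.1).integrable_mul (hTX p.2))
    (fun p => (hTY p.1).integrable_mul (hTY p.2)) (fun p => hmoment p.1 p.2)

variable {H : β → 𝒳 → ℝ} {f : ℝ → ℝ} {M : ℝ}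

theorem ae_abs_integral_comp_add_sub_le_of_condExp_ae_eq (hR : Measurable R)
    (hX : Measurable X) (hY : Measurable Y) (hRX : IndepFun R X μ) (hRY : IndepFun R Y μ)
    (hH : Measurable (Function.uncurry H)) (S : β → ℝ)
    (hHX : MemLp (fun ω => H (R ω) (X ω)) 3 μ) (hHY : MemLp (fun ω => H (R ω) (Y ω)) 3 μ)
    (hmean : μ[fun ω => H (R ω) (X ω) | MeasurableSpace.comap R inferInstance] =ᵐ[μ]
      μ[fun ω => H (R ω) (Y ω) | MeasurableSpace.comap R inferInstance])
    (hsq : μ[fun ω => H (R ω) (X ω) ^ 2 | MeasurableSpace.comap R inferInstance] =ᵐ[μ]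
      μ[fun ω => H (R ω) (Y ω) ^ 2 | MeasurableSpace.comap R inferInstance])
    (hf : ContDiff ℝ 3 f) (hf3 : ∀ x, |iteratedDeriv 3 f x| ≤ M) :
    ∀ᵐ ω ∂μ, |∫ ω', f (S (R ω) + H (R ω) (X ω')) ∂μ - ∫ ω', f (S (R ω) + H (R ω) (Y ω')) ∂μ| ≤
      M / 6 * (∫ ω', |H (R ω) (X ω')| ^ 3 ∂μ + ∫ ω', |H (R ω) (Y ω')| ^ 3 ∂μ) := by
  have hHX2 := hHX.mono_exponent (p := 2) (by norm_num)
  have hHY2 := hHY.mono_exponent (p := 2) (by norm_num)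
  filter_upwards [ae_memLp_comp_of_indepFun hR hX hRX hH (p := 3) (by norm_num) hHX,
    ae_memLp_comp_of_indepFun hR hY hRY hH (p := 3) (by norm_num) hHY,
    ae_integral_comp_eq_of_condExp_ae_eq hR hX hY hRX hRY hH (hHX.integrable (by norm_num))
      (hHY.integrable (by norm_num)) hmean,
    ae_integral_comp_eq_of_condExp_ae_eq (H := fun b x => H b x ^ 2) hR hX hY hRX hRY
      (hH.pow_const 2) hHX2.integrable_sq hHY2.integrable_sq hsq] with ω hωX hωY hω1 hω2
  exact abs_integral_comp_add_sub_le_of_moments_eq hf hf3 hωX hωY hω1 hω2 _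

theorem abs_integral_comp_add_sub_le_of_condExp_ae_eq (hR : Measurable R)
    (hX : Measurable X) (hY : Measurable Y) (hRX : IndepFun R X μ) (hRY : IndepFun R Y μ)
    (hH : Measurable (Function.uncurry H)) {S : β → ℝ} (hS : Measurable S)
    (hHX : MemLp (fun ω => H (R ω) (X ω)) 3 μ) (hHY : MemLp (fun ω => H (R ω) (Y ω)) 3 μ)
    (hmean : μ[fun ω => H (R ω) (X ω) | MeasurableSpace.comap R inferInstance] =ᵐ[μ]
      μ[fun ω => H (R ω) (Y ω) | MeasurableSpace.comap R inferInstance])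
    (hsq : μ[fun ω => H (R ω) (X ω) ^ 2 | MeasurableSpace.comap R inferInstance] =ᵐ[μ]
      μ[fun ω => H (R ω) (Y ω) ^ 2 | MeasurableSpace.comap R inferInstance])
    (hf : ContDiff ℝ 3 f) {M₀ : ℝ} (hf0 : ∀ x, |f x| ≤ M₀)
    (hf3 : ∀ x, |iteratedDeriv 3 f x| ≤ M) :
    |∫ ω, f (S (R ω) + H (R ω) (X ω)) ∂μ - ∫ ω, f (S (R ω) + H (R ω) (Y ω)) ∂μ| ≤
      M / 6 * (∫ ω, |H (R ω) (X ω)| ^ 3 ∂μ + ∫ ω, |H (R ω) (Y ω)| ^ 3 ∂μ) := by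
  have hfSH : Measurable (Function.uncurry fun b x => f (S b + H b x)) :=
    hf.continuous.measurable.comp ((hS.comp measurable_fst).add hH)
  have hfint : ∀ Z : Ω → 𝒳, Measurable Z →
      Integrable (fun ω => f (S (R ω) + H (R ω) (Z ω))) μ := fun Z hZ =>
    .of_bound (hfSH.comp (hR.prodMk hZ)).aestronglyMeasurable M₀
      (ae_of_all _ fun ω => by simpa only [Real.norm_eq_abs] using hf0 _)
  have hcube : ∀ Z : Ω → 𝒳, MemLp (fun ω => H (R ω) (Z ω)) 3 μ →
      Integrable (fun ω => |H (R ω) (Z ω)| ^ 3) μ := fun Z hZ => by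
    simpa only [Real.norm_eq_abs] using hZ.integrable_norm_pow'
  obtain ⟨hAX, hfX⟩ := integral_comp_eq_integral_integral_of_indepFun hR hX hRX hfSH (hfint X hX)
  obtain ⟨hAY, hfY⟩ := integral_comp_eq_integral_integral_of_indepFun hR hY hRY hfSH (hfint Y hY)
  obtain ⟨hBX, hcX⟩ := integral_comp_eq_integral_integral_of_indepFun (H := fun b x => |H b x| ^ 3)
    hR hX hRX (hH.abs.pow_const 3) (hcube X hHX)
  obtain ⟨hBY, hcY⟩ := integral_comp_eq_integral_integral_of_indepFun (H := fun b x => |H b x| ^ 3)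
    hR hY hRY (hH.abs.pow_const 3) (hcube Y hHY)
  rw [hfX, hfY, hcX, hcY, ← integral_sub hAX hAY, ← integral_add hBX hBY, ← integral_const_mul]
  exact abs_integral_le_integral_abs.trans (integral_mono_ae (hAX.sub hAY).abs
    ((hBX.add hBY).const_mul _) (ae_abs_integral_comp_add_sub_le_of_condExp_ae_eq hR hX hY
      hRX hRY hH S hHX hHY hmean hsq hf hf3))

end Lindeberg

section Coordinates

variable {n : ℕ} (w : Fin n → Fin n → 𝒳 → 𝒳 → ℝ) (ξ η : Fin n → Ω → 𝒳) (k : Fin n)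

def edgeTerm (i : {i : Fin n // i ≠ k}) (b : {i : Fin n // i ≠ k} → 𝒳) (x : 𝒳) : ℝ :=
  if (i : Fin n) < k then w i k (b i) x else w k i x (b i)

/-- `exceptSigma ξ η k` is by definition the σ-algebra generated by this map. -/
def exceptCoords (ω : Ω) (i : {i : Fin n // i ≠ k}) : 𝒳 :=
  lowerMix ξ η k i ω

def formWithout (b : {i : Fin n // i ≠ k} → 𝒳) : ℝ :=
  ∑ i : Fin n, ∑ j ∈ Finset.Ioi i,
    if h : i ≠ k ∧ j ≠ k then w i j (b ⟨i, h.1⟩) (b ⟨j, h.2⟩) else 0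

variable {w ξ η k}

section

omit [MeasurableSpace Ω] [MeasurableSpace 𝒳]

theorem edgeTerm_exceptCoords_of_lt {i : {i : Fin n // i ≠ k}} (hi : (i : Fin n) < k)
    (ω : Ω) (x : 𝒳) : edgeTerm w k i (exceptCoords ξ η k ω) x = w i k (η i ω) x := by
  simp [edgeTerm, exceptCoords, lowerMix, hi]

theorem edgeTerm_exceptCoords_of_gt {i : {i : Fin n // i ≠ k}} (hi : k < i)
    (ω : Ω) (x : 𝒳) : edgeTerm w k i (exceptCoords ξ η k ω) x = w k i x (ξ i ω) := by
  simp [edgeTerm, exceptCoords, lowerMix, hi.not_gt]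

theorem sum_edgeTerm_exceptCoords (ω : Ω) (x : 𝒳) :
    ∑ i, edgeTerm w k i (exceptCoords ξ η k ω) x =
      ∑ i ∈ Iio k, w i k (η i ω) x + ∑ j ∈ Ioi k, w k j x (ξ j ω) := by
  refine (sum_subtype_ne_eq_sum_Iio_add_sum_Ioi k fun i =>
    if i < k then w i k (lowerMix ξ η k i ω) x else w k i x (lowerMix ξ η k i ω)).trans ?_
  congr 1 <;> refine Finset.sum_congr rfl fun i hi => ?_
  · simp [lowerMix, Finset.mem_Iio.1 hi]
  · simp [lowerMix, (Finset.mem_Ioi.1 hi).not_gt]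

theorem incrXi_eq_sum_edgeTerm :
    incrXi w ξ η k = fun ω => ∑ i, edgeTerm w k i (exceptCoords ξ η k ω) (ξ k ω) :=
  funext fun ω => (sum_edgeTerm_exceptCoords ω _).symm

theorem incrEta_eq_sum_edgeTerm :
    incrEta w ξ η k = fun ω => ∑ i, edgeTerm w k i (exceptCoords ξ η k ω) (η k ω) :=
  funext fun ω => (sum_edgeTerm_exceptCoords ω _).symm

theorem Wk0_eq_formWithout : Wk0 w ξ η k = fun ω => formWithout w k (exceptCoords ξ η k ω) := by
  ext ω
  refine Finset.sum_congr rfl fun i _ => Finset.sum_congr rfl fun j _ => ?_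
  by_cases h : i ≠ k ∧ j ≠ k
  · simp only [if_pos h, dif_pos h, exceptCoords]
  · simp only [if_neg h, dif_neg h]

end

variable {μ : Measure Ω}

theorem measurable_exceptCoords (hξ : ∀ i, Measurable (ξ i)) (hη : ∀ i, Measurable (η i)) :
    Measurable (exceptCoords ξ η k) :=
  measurable_pi_lambda _ fun i => by
    by_cases h : (i : Fin n) < k
    · simpa [exceptCoords, lowerMix, h] using hη i
    · simpa [exceptCoords, lowerMix, h] using hξ i

theorem measurable_formWithout (hw : ∀ i j, Measurable (fun q : 𝒳 × 𝒳 => w i j q.1 q.2)) :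
    Measurable (formWithout w k) :=
  Finset.measurable_sum _ fun i _ => Finset.measurable_sum _ fun j _ => by
    by_cases h : i ≠ k ∧ j ≠ k
    · simp only [dif_pos h]
      fun_prop
    · simp only [dif_neg h, measurable_const]

theorem measurable_uncurry_edgeTerm (hw : ∀ i j, Measurable (fun q : 𝒳 × 𝒳 => w i j q.1 q.2))
    (i : {i : Fin n // i ≠ k}) : Measurable (Function.uncurry (edgeTerm w k i)) := by
  unfold edgeTerm
  split_ifs <;> fun_prop

theorem indepFun_exceptCoords (hindep : iIndepFun (Sum.elim ξ η) μ)
    (hξ : ∀ i, Measurable (ξ i)) (hη : ∀ i, Measurable (η i)) :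
    IndepFun (exceptCoords ξ η k) (ξ k) μ ∧ IndepFun (exceptCoords ξ η k) (η k) μ := by
  have hcoords : exceptCoords ξ η k = fun ω (i : {i : Fin n // i ≠ k}) =>
      Sum.elim ξ η (if (i : Fin n) < k then .inr i else .inl i) ω := by
    ext ω i
    by_cases h : (i : Fin n) < k <;> simp [exceptCoords, lowerMix, h]
  have hmeas : ∀ s, Measurable (Sum.elim ξ η s) := fun s => s.rec hξ hη
  rw [hcoords]
  constructor
  · refine hindep.indepFun_pi_comp hmeas (j := .inl k) fun i => ?_
    split_ifs <;> simp [i.2]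
  · refine hindep.indepFun_pi_comp hmeas (j := .inr k) fun i => ?_
    split_ifs <;> simp [i.2]

theorem memLp_edgeTerm_exceptCoords (hw : ∀ i j, Measurable (fun q : 𝒳 × 𝒳 => w i j q.1 q.2))
    (hξ : ∀ i, Measurable (ξ i)) (hη : ∀ i, Measurable (η i)) {Z : Ω → 𝒳} (hZ : Measurable Z)
    (hlow : ∀ i < k, Integrable (fun ω => w i k (η i ω) (Z ω) ^ 4) μ)
    (hhigh : ∀ j, k < j → Integrable (fun ω => w k j (Z ω) (ξ j ω) ^ 4) μ)
    (i : {i : Fin n // i ≠ k}) :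
    MemLp (fun ω => edgeTerm w k i (exceptCoords ξ η k ω) (Z ω)) 4 μ := by
  refine memLp_of_integrable_abs_pow (by norm_num) (((measurable_uncurry_edgeTerm hw i).comp
    ((measurable_exceptCoords hξ hη).prodMk hZ)).aestronglyMeasurable) ?_
  simp_rw [Even.pow_abs (by decide : Even 4)]
  rcases lt_or_gt_of_ne i.2 with h | h
  · simpa only [edgeTerm_exceptCoords_of_lt h] using hlow i h
  · simpa only [edgeTerm_exceptCoords_of_gt h] using hhigh i h

omit [MeasurableSpace 𝒳] in
theorem integral_edgeTerm_eq_zero {Z : Ω → 𝒳}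
    (hlow : ∀ i < k, ∀ a, ∫ ω, w i k a (Z ω) ∂μ = 0)
    (hhigh : ∀ j, k < j → ∀ a, ∫ ω, w k j (Z ω) a ∂μ = 0)
    (i : {i : Fin n // i ≠ k}) (b : {i : Fin n // i ≠ k} → 𝒳) :
    ∫ ω, edgeTerm w k i b (Z ω) ∂μ = 0 := by
  unfold edgeTerm
  split_ifs with h
  · exact hlow i h _
  · exact hhigh i (lt_of_le_of_ne (not_lt.1 h) (Ne.symm i.2)) _

omit [MeasurableSpace 𝒳] in
theorem integral_edgeTerm_mul_edgeTerm_eq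
    (hmatch1 : ∀ i j k : Fin n, i ≤ j → j < k → ∀ a b : 𝒳,
      (∫ ω, w i k a (ξ k ω) * w j k b (ξ k ω) ∂μ) =
        ∫ ω, w i k a (η k ω) * w j k b (η k ω) ∂μ)
    (hmatch2 : ∀ i j k : Fin n, i < j → j < k → ∀ a b : 𝒳,
      (∫ ω, w i j a (ξ j ω) * w j k (ξ j ω) b ∂μ) =
        ∫ ω, w i j a (η j ω) * w j k (η j ω) b ∂μ)
    (hmatch3 : ∀ i j k : Fin n, i < j → j ≤ k → ∀ a b : 𝒳,
      (∫ ω, w i j (ξ i ω) a * w i k (ξ i ω) b ∂μ) =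
        ∫ ω, w i j (η i ω) a * w i k (η i ω) b ∂μ)
    (i j : {i : Fin n // i ≠ k}) (b : {i : Fin n // i ≠ k} → 𝒳) :
    ∫ ω, edgeTerm w k i b (ξ k ω) * edgeTerm w k j b (ξ k ω) ∂μ =
      ∫ ω, edgeTerm w k i b (η k ω) * edgeTerm w k j b (η k ω) ∂μ := by
  wlog hij : (i : Fin n) ≤ j generalizing i j
  · simp_rw [mul_comm (edgeTerm w k i b _)]
    exact this j i (le_of_not_ge hij)
  unfold edgeTerm
  rcases lt_or_gt_of_ne i.2 with hik | hki <;> rcases lt_or_gt_of_ne j.2 with hjk | hkj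
  · simp only [if_pos hik, if_pos hjk]
    exact hmatch1 i j k hij hjk _ _
  · simp only [if_pos hik, if_neg hkj.not_gt]
    exact hmatch2 i k j hik hkj _ _
  · exact absurd (hjk.trans (hki.trans_le hij)) (lt_irrefl _)
  · simp only [if_neg hki.not_gt, if_neg hkj.not_gt]
    exact hmatch3 k i j hki hij _ _

end Coordinates

/-- Lindeberg swapping step for generalized quadratic forms: the first two conditional
moments of `W_k − W_{k,0}` and `W_{k+1} − W_{k,0}` given all coordinates except the `k`-th
coincide, and hence `|E f(W_k) − E f(W_{k+1})|` is bounded by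
`(sup|f^{(3)}|/6)(E|W_k − W_{k,0}|³ + E|W_{k+1} − W_{k,0}|³)`. -/
theorem lindeberg_swap_step
    (μ : Measure Ω) [IsProbabilityMeasure μ]
    [TopologicalSpace 𝒳] [PolishSpace 𝒳] [BorelSpace 𝒳]
    {n : ℕ} (ξ η : Fin n → Ω → 𝒳)
    (hmeasξ : ∀ i, Measurable (ξ i)) (hmeasη : ∀ i, Measurable (η i))
    (hindep : iIndepFun (Sum.elim ξ η) μ)
    (w : Fin n → Fin n → 𝒳 → 𝒳 → ℝ)
    (hw_meas : ∀ i j, Measurable (fun q : 𝒳 × 𝒳 => w i j q.1 q.2))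
    (hint4 : ∀ i j, i < j →
      Integrable (fun ω => (w i j (ξ i ω) (ξ j ω)) ^ 4) μ ∧
      Integrable (fun ω => (w i j (ξ i ω) (η j ω)) ^ 4) μ ∧
      Integrable (fun ω => (w i j (η i ω) (ξ j ω)) ^ 4) μ ∧
      Integrable (fun ω => (w i j (η i ω) (η j ω)) ^ 4) μ)
    (hdeg : ∀ i j, i < j → ∀ a : 𝒳,
      (∫ ω, w i j (ξ i ω) a ∂μ) = 0 ∧ (∫ ω, w i j a (ξ j ω) ∂μ) = 0 ∧
      (∫ ω, w i j (η i ω) a ∂μ) = 0 ∧ (∫ ω, w i j a (η j ω) ∂μ) = 0)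
    (hmatch1 : ∀ i j k : Fin n, i ≤ j → j < k → ∀ a b : 𝒳,
      (∫ ω, w i k a (ξ k ω) * w j k b (ξ k ω) ∂μ) =
        ∫ ω, w i k a (η k ω) * w j k b (η k ω) ∂μ)
    (hmatch2 : ∀ i j k : Fin n, i < j → j < k → ∀ a b : 𝒳,
      (∫ ω, w i j a (ξ j ω) * w j k (ξ j ω) b ∂μ) =
        ∫ ω, w i j a (η j ω) * w j k (η j ω) b ∂μ)
    (hmatch3 : ∀ i j k : Fin n, i < j → j ≤ k → ∀ a b : 𝒳,
      (∫ ω, w i j (ξ i ω) a * w i k (ξ i ω) b ∂μ) =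
        ∫ ω, w i j (η i ω) a * w i k (η i ω) b ∂μ)
    (k : Fin n)
    (f : ℝ → ℝ) (hf : ContDiff ℝ 3 f)
    (M₀ M : ℝ) (hf0 : ∀ x, |f x| ≤ M₀)
    (hf3 : ∀ x, |iteratedDeriv 3 f x| ≤ M) :
    (μ[incrXi w ξ η k | exceptSigma ξ η k] =ᵐ[μ]
        μ[incrEta w ξ η k | exceptSigma ξ η k]) ∧
    (μ[fun ω => (incrXi w ξ η k ω) ^ 2 | exceptSigma ξ η k] =ᵐ[μ]
        μ[fun ω => (incrEta w ξ η k ω) ^ 2 | exceptSigma ξ η k]) ∧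
    |(∫ ω, f (Wk0 w ξ η k ω + incrXi w ξ η k ω) ∂μ) -
        ∫ ω, f (Wk0 w ξ η k ω + incrEta w ξ η k ω) ∂μ| ≤
      M / 6 * ((∫ ω, |incrXi w ξ η k ω| ^ 3 ∂μ) + ∫ ω, |incrEta w ξ η k ω| ^ 3 ∂μ) := by
  have : Nonempty 𝒳 := ⟨ξ k (nonempty_of_isProbabilityMeasure μ).some⟩
  have hR := measurable_exceptCoords (k := k) hmeasξ hmeasη
  obtain ⟨hRξ, hRη⟩ := indepFun_exceptCoords (k := k) hindep hmeasξ hmeasη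
  have hT := measurable_uncurry_edgeTerm hw_meas (k := k)
  have hTξ := memLp_edgeTerm_exceptCoords hw_meas hmeasξ hmeasη (hmeasξ k)
    (fun i h => (hint4 i k h).2.2.1) (fun j h => (hint4 k j h).1)
  have hTη := memLp_edgeTerm_exceptCoords hw_meas hmeasξ hmeasη (hmeasη k)
    (fun i h => (hint4 i k h).2.2.2) (fun j h => (hint4 k j h).2.2.1)
  have hmean := condExp_sum_ae_eq_of_indepFun hR (hmeasξ k) (hmeasη k) hRξ hRη hT
    (fun i => (hTξ i).integrable (by norm_num)) (fun i => (hTη i).integrable (by norm_num))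
    fun i b => (integral_edgeTerm_eq_zero (fun i h a => (hdeg i k h a).2.1)
      (fun j h a => (hdeg k j h a).1) i b).trans
      (integral_edgeTerm_eq_zero (fun i h a => (hdeg i k h a).2.2.2)
        (fun j h a => (hdeg k j h a).2.2.1) i b).symm
  have hsq := condExp_sum_sq_ae_eq_of_indepFun hR (hmeasξ k) (hmeasη k) hRξ hRη hT
    (fun i => (hTξ i).mono_exponent (by norm_num)) (fun i => (hTη i).mono_exponent (by norm_num))
    (integral_edgeTerm_mul_edgeTerm_eq hmatch1 hmatch2 hmatch3)
  rw [incrXi_eq_sum_edgeTerm, incrEta_eq_sum_edgeTerm, Wk0_eq_formWithout]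
  exact ⟨hmean, hsq, abs_integral_comp_add_sub_le_of_condExp_ae_eq
    (H := fun b x => ∑ i, edgeTerm w k i b x) hR (hmeasξ k) (hmeasη k) hRξ hRη
    (Finset.measurable_sum _ fun i _ => hT i) (measurable_formWithout hw_meas)
    (memLp_finsetSum _ fun i _ => (hTξ i).mono_exponent (by norm_num))
    (memLp_finsetSum _ fun i _ => (hTη i).mono_exponent (by norm_num)) hmean hsq hf hf0 hf3⟩
end

section
/- Fourth moment bound for the swapped increment: In the Lindeberg step for quadratic forms, E[(W_k − W_{k,0})⁴] ≤ 3ρ Inf_k², where W_k − W_{k,0} = Σ_{i<k} w_{i,k}(ηᵢ,ξ_k) + Σ_{j>k} w_{k,j}(ξ_k,ξⱼ), ρ is the uniform fourth-moment ratio bound (E of any fourth power of a kernel ≤ ρ σ_{i,j}⁴), and Inf_k = Σ_{i<k} σ_{i,k}² + Σ_{j>k} σ_{k,j}². -/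
/-
Write the increment as `∑_{i ≠ k} f i (ζ k) (ζ i)`, where the independent family `ζ` takes
`η i` below `k` and `ξ i` above it. Once `ζ k = x` is frozen, the summands `Z i = f i x (ζ i)` are
independent and centred, so in the fourth moment of their sum only the diagonal terms survive:
`E (∑ Z i)⁴ = ∑ E (Z i)⁴ + 6 ∑_{i < j} E (Z i)² E (Z j)² ≤ 3 (∑ √(E (Z i)⁴))²`, since
`E Z² ≤ √(E Z⁴)`. Integrating over `x`, Minkowski's inequality in `L²` turns the conditional
`√(E (Z i)⁴)` into unconditional ones, and `E w⁴ ≤ ρ σ⁴` finishes.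
-/

open Finset MeasureTheory ProbabilityTheory

variable {Ω : Type*} [MeasurableSpace Ω] {𝒳 : Type*} [MeasurableSpace 𝒳]

/-- `σ_{i,j}² = E w_{i,j}(ξᵢ, ξⱼ)²`. -/
noncomputable def sigmaSq {n : ℕ} (μ : Measure Ω) (w : Fin n → Fin n → 𝒳 → 𝒳 → ℝ)
    (ξ : Fin n → Ω → 𝒳) (i j : Fin n) : ℝ :=
  ∫ ω, (w i j (ξ i ω) (ξ j ω)) ^ 2 ∂μ

/-- The influence of coordinate `k`: `Inf_k = Σ_{i<k} σ_{i,k}² + Σ_{j>k} σ_{k,j}²`. -/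
noncomputable def influence {n : ℕ} (μ : Measure Ω) (w : Fin n → Fin n → 𝒳 → 𝒳 → ℝ)
    (ξ : Fin n → Ω → 𝒳) (k : Fin n) : ℝ :=
  ∑ i ∈ Finset.Iio k, sigmaSq μ w ξ i k + ∑ j ∈ Finset.Ioi k, sigmaSq μ w ξ k j

theorem sq_sum_sqrt_le_mul_sq_sum {ι : Type*} {s : Finset ι} {q v : ι → ℝ} {ρ : ℝ}
    (hρ : 0 ≤ ρ) (hv : ∀ i ∈ s, 0 ≤ v i) (hq : ∀ i ∈ s, q i ≤ ρ * v i ^ 2) :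
    (∑ i ∈ s, √(q i)) ^ 2 ≤ ρ * (∑ i ∈ s, v i) ^ 2 := by
  calc (∑ i ∈ s, √(q i)) ^ 2 ≤ (∑ i ∈ s, √ρ * v i) ^ 2 := by
        gcongr with i hi
        calc √(q i) ≤ √(ρ * v i ^ 2) := Real.sqrt_le_sqrt (hq i hi)
          _ = √ρ * v i := by rw [Real.sqrt_mul hρ, Real.sqrt_sq (hv i hi)]
    _ = ρ * (∑ i ∈ s, v i) ^ 2 := by rw [← mul_sum, mul_pow, Real.sq_sqrt hρ]

theorem Finset.sum_Iio_add_sum_Ioi {α M : Type*} [LinearOrder α] [LocallyFiniteOrderBot α]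
    [LocallyFiniteOrderTop α] [AddCommMonoid M] (k : α) (g h : α → M) :
    ∑ i ∈ Iio k, g i + ∑ i ∈ Ioi k, h i = ∑ i ∈ Iio k ∪ Ioi k, if i < k then g i else h i := by
  rw [sum_union (disjoint_left.2 fun i hi hi' => (mem_Iio.1 hi).not_gt (mem_Ioi.1 hi'))]
  congr 1 <;> refine sum_congr rfl fun i hi => ?_
  · rw [if_pos (mem_Iio.1 hi)]
  · rw [if_neg (mem_Ioi.1 hi).not_gt]

section Moments
variable {α : Type*} [MeasurableSpace α] {μ : Measure α}

theorem MeasureTheory.MemLp.integrable_pow [IsFiniteMeasure μ] {f : α → ℝ} {p : ℕ}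
    (hf : MemLp f p μ) : Integrable (fun x => f x ^ p) μ :=
  (integrable_norm_iff (hf.1.pow p)).1 <| by
    simpa only [Pi.pow_apply, norm_pow] using hf.integrable_norm_pow'

theorem MeasureTheory.memLp_of_integrable_pow_of_even {f : α → ℝ} {p : ℕ} (hp : Even p)
    (hp0 : p ≠ 0) (hf : AEStronglyMeasurable f μ) (h : Integrable (fun x => f x ^ p) μ) :
    MemLp f p μ := by
  rw [← integrable_norm_rpow_iff hf (by simpa using hp0) (by simp)]
  refine h.congr (ae_of_all _ fun x => ?_)
  simp [Real.norm_eq_abs, hp.pow_abs]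

theorem integral_mul_le_sqrt_mul_sqrt {f g : α → ℝ} (hf : MemLp f 2 μ) (hg : MemLp g 2 μ) :
    ∫ x, f x * g x ∂μ ≤ √(∫ x, f x ^ 2 ∂μ) * √(∫ x, g x ^ 2 ∂μ) := by
  have hL2 : ∀ h : α → ℝ, (∫ x, ‖h x‖ ^ (2 : ℝ) ∂μ) ^ (1 / 2 : ℝ) = √(∫ x, h x ^ 2 ∂μ) :=
    fun h => by simp [Real.sqrt_eq_rpow, Real.norm_eq_abs]
  calc ∫ x, f x * g x ∂μ ≤ ∫ x, ‖f x‖ * ‖g x‖ ∂μ :=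
        integral_mono (hf.integrable_mul hg) (hf.norm.integrable_mul hg.norm)
          fun x => by simpa [← abs_mul] using le_abs_self (f x * g x)
    _ ≤ _ := integral_mul_norm_le_Lp_mul_Lq .two_two (by simpa using hf) (by simpa using hg)
    _ = _ := by rw [hL2, hL2]

theorem integral_sq_le_sqrt_integral_pow_four [IsProbabilityMeasure μ] {f : α → ℝ}
    (hf : MemLp f 4 μ) : ∫ x, f x ^ 2 ∂μ ≤ √(∫ x, f x ^ 4 ∂μ) := by
  have hf4 : Integrable (fun x => (f x ^ 2) ^ 2) μ := by
    simpa only [← pow_mul] using hf.integrable_pow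
  have hf2 : MemLp (fun x => f x ^ 2) 2 μ :=
    (memLp_two_iff_integrable_sq (hf.1.pow 2)).2 hf4
  simpa [← pow_mul] using integral_mul_le_sqrt_mul_sqrt hf2 (memLp_const (1 : ℝ))

theorem integral_sq_sum_le_sq_sum_sqrt {ι : Type*} {g : ι → α → ℝ} {s : Finset ι}
    (hg : ∀ i ∈ s, MemLp (g i) 2 μ) :
    ∫ x, (∑ i ∈ s, g i x) ^ 2 ∂μ ≤ (∑ i ∈ s, √(∫ x, g i x ^ 2 ∂μ)) ^ 2 := by
  have hprod : ∀ i ∈ s, ∀ j ∈ s, Integrable (fun x => g i x * g j x) μ :=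
    fun i hi j hj => (hg i hi).integrable_mul (hg j hj)
  calc ∫ x, (∑ i ∈ s, g i x) ^ 2 ∂μ = ∑ i ∈ s, ∑ j ∈ s, ∫ x, g i x * g j x ∂μ := by
        simp_rw [sq, sum_mul_sum]
        rw [integral_finsetSum s fun i hi => integrable_finsetSum s (hprod i hi)]
        exact sum_congr rfl fun i hi => integral_finsetSum s (hprod i hi)
    _ ≤ ∑ i ∈ s, ∑ j ∈ s, √(∫ x, g i x ^ 2 ∂μ) * √(∫ x, g j x ^ 2 ∂μ) :=
        sum_le_sum fun i hi => sum_le_sum fun j hj =>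
          integral_mul_le_sqrt_mul_sqrt (hg i hi) (hg j hj)
    _ = (∑ i ∈ s, √(∫ x, g i x ^ 2 ∂μ)) ^ 2 := by rw [sq, sum_mul_sum]

end Moments

namespace ProbabilityTheory

section IndependentSums
variable {μ : Measure Ω}

theorem IndepFun.integral_add_pow [IsFiniteMeasure μ] {X Y : Ω → ℝ}
    (hXY : IndepFun X Y μ) {n : ℕ} (hX : MemLp X n μ) (hY : MemLp Y n μ) :
    ∫ ω, (X ω + Y ω) ^ n ∂μ =
      ∑ p ∈ range (n + 1), (∫ ω, X ω ^ p ∂μ) * (∫ ω, Y ω ^ (n - p) ∂μ) * n.choose p := by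
  have hpow : ∀ p ≤ n, IndepFun (fun ω => X ω ^ p) (fun ω => Y ω ^ (n - p)) μ := fun p _ =>
    hXY.comp (measurable_id.pow_const p) (measurable_id.pow_const (n - p))
  have hint : ∀ {Z : Ω → ℝ}, MemLp Z n μ → ∀ p ≤ n, Integrable (fun ω => Z ω ^ p) μ :=
    fun hZ p hp => (hZ.mono_exponent (by exact_mod_cast hp)).integrable_pow
  simp_rw [add_pow]
  rw [integral_finsetSum _ fun p hp => ?_]
  · refine sum_congr rfl fun p hp => ?_
    rw [integral_mul_const, (hpow p (by grind)).integral_fun_mul_eq_mul_integral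
      (hX.1.pow p) (hY.1.pow (n - p))]
  · exact ((hpow p (by grind)).integrable_mul (hint hX p (by grind))
      (hint hY (n - p) (by grind))).mul_const _

theorem IndepFun.integral_add_sq_of_integral_eq_zero [IsProbabilityMeasure μ]
    {X Y : Ω → ℝ} (hXY : IndepFun X Y μ) (hX : MemLp X 2 μ) (hY : MemLp Y 2 μ)
    (hX0 : ∫ ω, X ω ∂μ = 0) (hY0 : ∫ ω, Y ω ∂μ = 0) :
    ∫ ω, (X ω + Y ω) ^ 2 ∂μ = ∫ ω, X ω ^ 2 ∂μ + ∫ ω, Y ω ^ 2 ∂μ := by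
  rw [hXY.integral_add_pow hX hY]
  norm_num [sum_range_succ, hX0, hY0, Nat.choose]
  ring

theorem IndepFun.integral_add_pow_four_of_integral_eq_zero
    [IsProbabilityMeasure μ] {X Y : Ω → ℝ} (hXY : IndepFun X Y μ) (hX : MemLp X 4 μ)
    (hY : MemLp Y 4 μ) (hX0 : ∫ ω, X ω ∂μ = 0) (hY0 : ∫ ω, Y ω ∂μ = 0) :
    ∫ ω, (X ω + Y ω) ^ 4 ∂μ =
      ∫ ω, X ω ^ 4 ∂μ + 6 * (∫ ω, X ω ^ 2 ∂μ) * (∫ ω, Y ω ^ 2 ∂μ) + ∫ ω, Y ω ^ 4 ∂μ := by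
  rw [hXY.integral_add_pow hX hY]
  norm_num [sum_range_succ, hX0, hY0, Nat.choose]
  ring

variable {ι : Type*} {Z : ι → Ω → ℝ}

theorem iIndepFun.indepFun_sum_of_notMem (hZ : iIndepFun Z μ)
    (hmeas : ∀ i, Measurable (Z i)) {s : Finset ι} {a : ι} (ha : a ∉ s) :
    IndepFun (Z a) (fun ω => ∑ i ∈ s, Z i ω) μ := by
  simpa only [← Finset.sum_apply] using (hZ.indepFun_finsetSum_of_notMem hmeas ha).symm

variable [IsProbabilityMeasure μ]

theorem iIndepFun.integral_sum_sq (hZ : iIndepFun Z μ)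
    (hmeas : ∀ i, Measurable (Z i)) {s : Finset ι} (hL2 : ∀ i ∈ s, MemLp (Z i) 2 μ)
    (hmean : ∀ i ∈ s, ∫ ω, Z i ω ∂μ = 0) :
    ∫ ω, (∑ i ∈ s, Z i ω) ^ 2 ∂μ = ∑ i ∈ s, ∫ ω, Z i ω ^ 2 ∂μ := by
  classical
  induction s using Finset.induction_on with
  | empty => simp
  | insert a s ha ih =>
    have hS : MemLp (fun ω => ∑ i ∈ s, Z i ω) 2 μ :=
      memLp_finsetSum s fun i hi => hL2 i (mem_insert_of_mem hi)
    have hSmean : ∫ ω, ∑ i ∈ s, Z i ω ∂μ = 0 := by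
      rw [integral_finsetSum s fun i hi => (hL2 i (mem_insert_of_mem hi)).integrable one_le_two]
      exact sum_eq_zero fun i hi => hmean i (mem_insert_of_mem hi)
    simp_rw [sum_insert ha]
    rw [(hZ.indepFun_sum_of_notMem hmeas ha).integral_add_sq_of_integral_eq_zero
      (hL2 a (mem_insert_self a s)) hS (hmean a (mem_insert_self a s)) hSmean,
      ih (fun i hi => hL2 i (mem_insert_of_mem hi)) (fun i hi => hmean i (mem_insert_of_mem hi))]

theorem iIndepFun.integral_sum_pow_four_le (hZ : iIndepFun Z μ)
    (hmeas : ∀ i, Measurable (Z i)) {s : Finset ι} (hL4 : ∀ i ∈ s, MemLp (Z i) 4 μ)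
    (hmean : ∀ i ∈ s, ∫ ω, Z i ω ∂μ = 0) :
    ∫ ω, (∑ i ∈ s, Z i ω) ^ 4 ∂μ ≤ 3 * (∑ i ∈ s, √(∫ ω, Z i ω ^ 4 ∂μ)) ^ 2 := by
  classical
  induction s using Finset.induction_on with
  | empty => simp
  | insert a s ha ih =>
    have hL4s : ∀ i ∈ s, MemLp (Z i) 4 μ := fun i hi => hL4 i (mem_insert_of_mem hi)
    have hmeans : ∀ i ∈ s, ∫ ω, Z i ω ∂μ = 0 := fun i hi => hmean i (mem_insert_of_mem hi)
    have hL4a : MemLp (Z a) 4 μ := hL4 a (mem_insert_self a s)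
    have hS : MemLp (fun ω => ∑ i ∈ s, Z i ω) 4 μ := memLp_finsetSum s hL4s
    have hSmean : ∫ ω, ∑ i ∈ s, Z i ω ∂μ = 0 := by
      rw [integral_finsetSum s fun i hi => (hL4s i hi).integrable (by norm_num)]
      exact sum_eq_zero hmeans
    have hS2 : ∫ ω, (∑ i ∈ s, Z i ω) ^ 2 ∂μ ≤ ∑ i ∈ s, √(∫ ω, Z i ω ^ 4 ∂μ) := by
      rw [hZ.integral_sum_sq hmeas (fun i hi => (hL4s i hi).mono_exponent (by norm_num)) hmeans]
      exact sum_le_sum fun i hi => integral_sq_le_sqrt_integral_pow_four (hL4s i hi)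
    have hcross := mul_le_mul (integral_sq_le_sqrt_integral_pow_four hL4a) hS2
      (integral_nonneg fun ω => sq_nonneg _) (Real.sqrt_nonneg _)
    have hZa4 : ∫ ω, Z a ω ^ 4 ∂μ = √(∫ ω, Z a ω ^ 4 ∂μ) ^ 2 :=
      (Real.sq_sqrt (integral_nonneg fun ω => by positivity)).symm
    simp_rw [sum_insert ha]
    rw [(hZ.indepFun_sum_of_notMem hmeas ha).integral_add_pow_four_of_integral_eq_zero hL4a hS
      (hmean a (mem_insert_self a s)) hSmean]
    -- with `q = √(E (Z a)⁴)` and `Q = ∑ √(E (Z i)⁴)`: `q² + 6 q Q + 3 Q² ≤ 3 (q + Q)²`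
    nlinarith [ih hL4s hmeans, sq_nonneg √(∫ ω, Z a ω ^ 4 ∂μ)]

end IndependentSums

section Freezing
variable {α β : Type*} [MeasurableSpace α] [MeasurableSpace β] {μ : Measure Ω}
  [IsFiniteMeasure μ] {X : Ω → α} {Y : Ω → β} {F : α → β → ℝ}

theorem IndepFun.integrable_uncurry_prod_map (hXY : IndepFun X Y μ)
    (hX : AEMeasurable X μ) (hY : AEMeasurable Y μ) (hF : Measurable (Function.uncurry F))
    (hint : Integrable (fun ω => F (X ω) (Y ω)) μ) :
    Integrable (Function.uncurry F) ((μ.map X).prod (μ.map Y)) := by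
  rw [← hXY.map_prod_eq_prod_map_map hX hY,
    integrable_map_measure hF.aestronglyMeasurable (hX.prodMk hY)]
  exact hint

theorem IndepFun.ae_integrable_comp_right (hXY : IndepFun X Y μ)
    (hX : AEMeasurable X μ) (hY : AEMeasurable Y μ) (hF : Measurable (Function.uncurry F))
    (hint : Integrable (fun ω => F (X ω) (Y ω)) μ) :
    ∀ᵐ x ∂μ.map X, Integrable (fun ω => F x (Y ω)) μ := by
  filter_upwards [(hXY.integrable_uncurry_prod_map hX hY hF hint).prod_right_ae] with x hx
  exact (integrable_map_measure (hF.comp measurable_prodMk_left).aestronglyMeasurable hY).1 hx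

theorem IndepFun.integrable_integral_comp_right (hXY : IndepFun X Y μ)
    (hX : AEMeasurable X μ) (hY : AEMeasurable Y μ) (hF : Measurable (Function.uncurry F))
    (hint : Integrable (fun ω => F (X ω) (Y ω)) μ) :
    Integrable (fun x => ∫ ω, F x (Y ω) ∂μ) (μ.map X) :=
  (hXY.integrable_uncurry_prod_map hX hY hF hint).integral_prod_left.congr <| ae_of_all _ fun _ =>
    integral_map hY (hF.comp measurable_prodMk_left).aestronglyMeasurable

theorem IndepFun.integral_comp_eq_integral_map_integral (hXY : IndepFun X Y μ)
    (hX : AEMeasurable X μ) (hY : AEMeasurable Y μ) (hF : Measurable (Function.uncurry F))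
    (hint : Integrable (fun ω => F (X ω) (Y ω)) μ) :
    ∫ ω, F (X ω) (Y ω) ∂μ = ∫ x, ∫ ω, F x (Y ω) ∂μ ∂μ.map X := by
  have hmap : ∫ ω, F (X ω) (Y ω) ∂μ = ∫ p, Function.uncurry F p ∂μ.map fun ω => (X ω, Y ω) :=
    (integral_map (hX.prodMk hY) hF.aestronglyMeasurable).symm
  rw [hmap, hXY.map_prod_eq_prod_map_map hX hY,
    integral_prod _ (hXY.integrable_uncurry_prod_map hX hY hF hint)]
  exact integral_congr_ae <| ae_of_all _ fun _ =>
    integral_map hY (hF.comp measurable_prodMk_left).aestronglyMeasurable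

end Freezing

section ConditionalFourthMoment
variable {ι : Type*} {μ : Measure Ω} [IsProbabilityMeasure μ] {ζ : ι → Ω → 𝒳}
  {f : ι → 𝒳 → 𝒳 → ℝ} {k : ι} {s : Finset ι}

theorem iIndepFun.integral_comp_sum_eq_integral_map_integral (hζ : iIndepFun ζ μ)
    (hmeas : ∀ i, Measurable (ζ i)) (hk : k ∉ s) (hf : ∀ i, Measurable (Function.uncurry (f i)))
    {φ : ℝ → ℝ} (hφ : Measurable φ)
    (hint : Integrable (fun ω => φ (∑ i ∈ s, f i (ζ k ω) (ζ i ω))) μ) :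
    ∫ ω, φ (∑ i ∈ s, f i (ζ k ω) (ζ i ω)) ∂μ =
      ∫ x, ∫ ω, φ (∑ i ∈ s, f i x (ζ i ω)) ∂μ ∂μ.map (ζ k) := by
  have hY : IndepFun (ζ k) (fun ω (j : s) => ζ j ω) μ :=
    (hζ.indepFun_finset {k} s (disjoint_singleton_left.2 hk) hmeas).comp
      (measurable_pi_apply (⟨k, mem_singleton_self k⟩ : ({k} : Finset ι))) measurable_id
  have hF : Measurable fun p : 𝒳 × (s → 𝒳) => φ (∑ j : s, f j p.1 (p.2 j)) := by
    refine hφ.comp (Finset.measurable_sum _ fun j _ => ?_)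
    exact (hf j).comp (measurable_fst.prodMk ((measurable_pi_apply j).comp measurable_snd))
  have hsum : ∀ x ω, ∑ j : s, f j x (ζ j ω) = ∑ i ∈ s, f i x (ζ i ω) :=
    fun x ω => sum_coe_sort s fun i => f i x (ζ i ω)
  simpa only [hsum] using hY.integral_comp_eq_integral_map_integral
    (F := fun x (y : s → 𝒳) => φ (∑ j : s, f j x (y j))) (hmeas k).aemeasurable
    (measurable_pi_lambda _ fun j : s => hmeas j).aemeasurable hF (by simpa only [hsum] using hint)

theorem iIndepFun.ae_integral_sum_comp_pow_four_le (hζ : iIndepFun ζ μ)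
    (hmeas : ∀ i, Measurable (ζ i)) (hk : k ∉ s) (hf : ∀ i, Measurable (Function.uncurry (f i)))
    (hL4 : ∀ i ∈ s, MemLp (fun ω => f i (ζ k ω) (ζ i ω)) 4 μ)
    (hmean : ∀ i ∈ s, ∀ x, ∫ ω, f i x (ζ i ω) ∂μ = 0) :
    ∀ᵐ x ∂μ.map (ζ k), ∫ ω, (∑ i ∈ s, f i x (ζ i ω)) ^ 4 ∂μ ≤
      3 * (∑ i ∈ s, √(∫ ω, f i x (ζ i ω) ^ 4 ∂μ)) ^ 2 := by
  have hfx : ∀ i x, Measurable (f i x) := fun i x => (hf i).comp measurable_prodMk_left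
  have hsec : ∀ᵐ x ∂μ.map (ζ k), ∀ i ∈ s, MemLp (fun ω => f i x (ζ i ω)) 4 μ := by
    rw [Filter.eventually_all_finset]
    intro i hi
    filter_upwards [(hζ.indepFun (ne_of_mem_of_not_mem hi hk).symm).ae_integrable_comp_right
      (F := fun x y => f i x y ^ 4) (hmeas k).aemeasurable (hmeas i).aemeasurable
      ((hf i).pow_const 4) (hL4 i hi).integrable_pow] with x hx
    exact memLp_of_integrable_pow_of_even (by norm_num) (by norm_num)
      ((hfx i x).comp (hmeas i)).aestronglyMeasurable hx
  filter_upwards [hsec] with x hx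
  exact (hζ.comp (fun i => f i x) fun i => hfx i x).integral_sum_pow_four_le
    (fun i => (hfx i x).comp (hmeas i)) hx fun i hi => hmean i hi x

theorem iIndepFun.integral_sum_comp_pow_four_le (hζ : iIndepFun ζ μ)
    (hmeas : ∀ i, Measurable (ζ i)) (hk : k ∉ s) (hf : ∀ i, Measurable (Function.uncurry (f i)))
    (hL4 : ∀ i ∈ s, MemLp (fun ω => f i (ζ k ω) (ζ i ω)) 4 μ)
    (hmean : ∀ i ∈ s, ∀ x, ∫ ω, f i x (ζ i ω) ∂μ = 0) :
    ∫ ω, (∑ i ∈ s, f i (ζ k ω) (ζ i ω)) ^ 4 ∂μ ≤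
      3 * (∑ i ∈ s, √(∫ ω, f i (ζ k ω) (ζ i ω) ^ 4 ∂μ)) ^ 2 := by
  set M : ι → 𝒳 → ℝ := fun i x => ∫ ω, f i x (ζ i ω) ^ 4 ∂μ
  have hM0 : ∀ i x, 0 ≤ M i x := fun i x => integral_nonneg fun ω => by positivity
  have hindep : ∀ i ∈ s, IndepFun (ζ k) (ζ i) μ := fun i hi =>
    hζ.indepFun (ne_of_mem_of_not_mem hi hk).symm
  have hM : ∀ i ∈ s, ∫ x, M i x ∂μ.map (ζ k) = ∫ ω, f i (ζ k ω) (ζ i ω) ^ 4 ∂μ := fun i hi =>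
    ((hindep i hi).integral_comp_eq_integral_map_integral (F := fun x y => f i x y ^ 4)
      (hmeas k).aemeasurable (hmeas i).aemeasurable ((hf i).pow_const 4)
      (hL4 i hi).integrable_pow).symm
  have hsqrtM : ∀ i ∈ s, MemLp (fun x => √(M i x)) 2 (μ.map (ζ k)) := by
    intro i hi
    have hMint : Integrable (M i) (μ.map (ζ k)) :=
      (hindep i hi).integrable_integral_comp_right (F := fun x y => f i x y ^ 4)
        (hmeas k).aemeasurable (hmeas i).aemeasurable ((hf i).pow_const 4)
        (hL4 i hi).integrable_pow
    refine (memLp_two_iff_integrable_sq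
      (Real.continuous_sqrt.comp_aestronglyMeasurable hMint.1)).2 (hMint.congr ?_)
    exact ae_of_all _ fun x => (Real.sq_sqrt (hM0 i x)).symm
  calc ∫ ω, (∑ i ∈ s, f i (ζ k ω) (ζ i ω)) ^ 4 ∂μ
      = ∫ x, ∫ ω, (∑ i ∈ s, f i x (ζ i ω)) ^ 4 ∂μ ∂μ.map (ζ k) :=
        hζ.integral_comp_sum_eq_integral_map_integral hmeas hk hf (measurable_id.pow_const 4)
          (memLp_finsetSum s hL4).integrable_pow
    _ ≤ ∫ x, 3 * (∑ i ∈ s, √(M i x)) ^ 2 ∂μ.map (ζ k) :=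
        integral_mono_of_nonneg (ae_of_all _ fun x => integral_nonneg fun ω => by positivity)
          ((memLp_finsetSum s hsqrtM).integrable_sq.const_mul 3)
          (hζ.ae_integral_sum_comp_pow_four_le hmeas hk hf hL4 hmean)
    _ = 3 * ∫ x, (∑ i ∈ s, √(M i x)) ^ 2 ∂μ.map (ζ k) := integral_const_mul _ _
    _ ≤ 3 * (∑ i ∈ s, √(∫ x, √(M i x) ^ 2 ∂μ.map (ζ k))) ^ 2 := by
        gcongr
        exact integral_sq_sum_le_sq_sum_sqrt hsqrtM
    _ = 3 * (∑ i ∈ s, √(∫ ω, f i (ζ k ω) (ζ i ω) ^ 4 ∂μ)) ^ 2 := by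
        refine congrArg (3 * · ^ 2) (sum_congr rfl fun i hi => ?_)
        simp_rw [Real.sq_sqrt (hM0 i _), hM i hi]

end ConditionalFourthMoment

end ProbabilityTheory

section Hybrid
variable {α β : Type*} {n : ℕ} {ξ η : Fin n → α → β} {w : Fin n → Fin n → β → β → ℝ}
  {k i : Fin n}

def hybrid (ξ η : Fin n → α → β) (k : Fin n) : Fin n → α → β :=
  fun i => if i < k then η i else ξ i

def pairKernel (w : Fin n → Fin n → β → β → ℝ) (k : Fin n) : Fin n → β → β → ℝ :=
  fun i x y => if i < k then w i k y x else w k i x y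

theorem hybrid_self : hybrid ξ η k k = ξ k := by
  simp [hybrid]

theorem measurable_hybrid [MeasurableSpace α] [MeasurableSpace β] (hξ : ∀ i, Measurable (ξ i))
    (hη : ∀ i, Measurable (η i)) (i : Fin n) : Measurable (hybrid ξ η k i) := by
  by_cases h : i < k <;> simp [hybrid, h, hξ, hη]

theorem ProbabilityTheory.iIndepFun.hybrid [MeasurableSpace α] [MeasurableSpace β]
    {μ : Measure α} (h : iIndepFun (Sum.elim ξ η) μ) (k : Fin n) :
    iIndepFun (hybrid ξ η k) μ := by
  have hg : Function.Injective fun i : Fin n => if i < k then Sum.inr i else Sum.inl i := by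
    intro i j hij
    by_cases hi : i < k <;> by_cases hj : j < k <;> simp [hi, hj] at hij <;> exact hij
  convert h.precomp hg using 1
  funext i
  by_cases hi : i < k <;> simp [_root_.hybrid, hi]

theorem measurable_pairKernel [MeasurableSpace β]
    (hw : ∀ i j, Measurable fun q : β × β => w i j q.1 q.2) (i : Fin n) :
    Measurable (Function.uncurry (pairKernel w k i)) := by
  by_cases h : i < k
  · convert (hw i k).comp measurable_swap using 1
    funext q
    simp [pairKernel, h, Function.uncurry]
  · convert hw k i using 1
    funext q
    simp [pairKernel, h, Function.uncurry]

theorem sum_Iio_add_sum_Ioi_eq_sum_pairKernel_hybrid (ω : α) :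
    ∑ i ∈ Iio k, w i k (η i ω) (ξ k ω) + ∑ j ∈ Ioi k, w k j (ξ k ω) (ξ j ω) =
      ∑ i ∈ Iio k ∪ Ioi k, pairKernel w k i (ξ k ω) (hybrid ξ η k i ω) := by
  rw [sum_Iio_add_sum_Ioi]
  refine sum_congr rfl fun i _ => ?_
  by_cases h : i < k <;> simp [hybrid, pairKernel, h]

theorem memLp_pairKernel_hybrid [MeasurableSpace α] [MeasurableSpace β] {μ : Measure α}
    (hw : ∀ i j, Measurable fun q : β × β => w i j q.1 q.2)
    (hξ : ∀ i, Measurable (ξ i)) (hη : ∀ i, Measurable (η i))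
    (hint4 : ∀ i j, i < j →
      Integrable (fun ω => (w i j (ξ i ω) (ξ j ω)) ^ 4) μ ∧
      Integrable (fun ω => (w i j (η i ω) (ξ j ω)) ^ 4) μ) (hi : i ≠ k) :
    MemLp (fun ω => pairKernel w k i (ξ k ω) (hybrid ξ η k i ω)) 4 μ := by
  have hmeas := (measurable_pairKernel (k := k) hw i).comp
    ((hξ k).prodMk (measurable_hybrid (k := k) hξ hη i))
  refine memLp_of_integrable_pow_of_even (by norm_num) (by norm_num) hmeas.aestronglyMeasurable ?_
  rcases hi.lt_or_gt with h | h
  · simpa [hybrid, pairKernel, h] using (hint4 i k h).2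
  · simpa [hybrid, pairKernel, h.not_gt] using (hint4 k i h).1

theorem integral_pairKernel_hybrid_eq_zero [MeasurableSpace α] {μ : Measure α}
    (hdeg : ∀ i j, i < j → ∀ a : β,
      (∫ ω, w i j (ξ i ω) a ∂μ) = 0 ∧ (∫ ω, w i j a (ξ j ω) ∂μ) = 0 ∧
      (∫ ω, w i j (η i ω) a ∂μ) = 0 ∧ (∫ ω, w i j a (η j ω) ∂μ) = 0)
    (hi : i ≠ k) (x : β) : ∫ ω, pairKernel w k i x (hybrid ξ η k i ω) ∂μ = 0 := by
  rcases hi.lt_or_gt with h | h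
  · simpa [hybrid, pairKernel, h] using (hdeg i k h x).2.2.1
  · simpa [hybrid, pairKernel, h.not_gt] using (hdeg k i h x).2.1

theorem integral_pairKernel_hybrid_pow_four_le [MeasurableSpace α] {μ : Measure α} {ρ : ℝ}
    (hdom : ∀ i j, i < j →
      (∫ ω, (w i j (ξ i ω) (ξ j ω)) ^ 4 ∂μ) ≤ ρ * (sigmaSq μ w ξ i j) ^ 2 ∧
      (∫ ω, (w i j (η i ω) (ξ j ω)) ^ 4 ∂μ) ≤ ρ * (sigmaSq μ w ξ i j) ^ 2) (hi : i ≠ k) :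
    ∫ ω, pairKernel w k i (ξ k ω) (hybrid ξ η k i ω) ^ 4 ∂μ ≤
      ρ * (if i < k then sigmaSq μ w ξ i k else sigmaSq μ w ξ k i) ^ 2 := by
  rcases hi.lt_or_gt with h | h
  · simpa [hybrid, pairKernel, h] using (hdom i k h).2
  · simpa [hybrid, pairKernel, h.not_gt] using (hdom k i h).1

end Hybrid

theorem fourth_moment_increment_le_general
    (μ : Measure Ω) [IsProbabilityMeasure μ]
    {n : ℕ} (ξ η : Fin n → Ω → 𝒳)
    (hmeasξ : ∀ i, Measurable (ξ i)) (hmeasη : ∀ i, Measurable (η i))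
    (hindep : iIndepFun (Sum.elim ξ η) μ)
    (w : Fin n → Fin n → 𝒳 → 𝒳 → ℝ)
    (hw_meas : ∀ i j, Measurable (fun q : 𝒳 × 𝒳 => w i j q.1 q.2))
    (hint4 : ∀ i j, i < j →
      Integrable (fun ω => (w i j (ξ i ω) (ξ j ω)) ^ 4) μ ∧
      Integrable (fun ω => (w i j (η i ω) (ξ j ω)) ^ 4) μ)
    (hdeg : ∀ i j, i < j → ∀ a : 𝒳,
      (∫ ω, w i j (ξ i ω) a ∂μ) = 0 ∧ (∫ ω, w i j a (ξ j ω) ∂μ) = 0 ∧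
      (∫ ω, w i j (η i ω) a ∂μ) = 0 ∧ (∫ ω, w i j a (η j ω) ∂μ) = 0)
    (ρ : ℝ) (hρ : 0 ≤ ρ)
    (hdom : ∀ i j, i < j →
      (∫ ω, (w i j (ξ i ω) (ξ j ω)) ^ 4 ∂μ) ≤ ρ * (sigmaSq μ w ξ i j) ^ 2 ∧
      (∫ ω, (w i j (η i ω) (ξ j ω)) ^ 4 ∂μ) ≤ ρ * (sigmaSq μ w ξ i j) ^ 2)
    (k : Fin n) :
    (∫ ω, (∑ i ∈ Finset.Iio k, w i k (η i ω) (ξ k ω) +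
            ∑ j ∈ Finset.Ioi k, w k j (ξ k ω) (ξ j ω)) ^ 4 ∂μ) ≤
      3 * ρ * (influence μ w ξ k) ^ 2 := by
  have hks : k ∉ Iio k ∪ Ioi k := by simp
  have hne : ∀ i ∈ Iio k ∪ Ioi k, i ≠ k := fun i hi => ne_of_mem_of_not_mem hi hks
  have hbound := (hindep.hybrid k).integral_sum_comp_pow_four_le
    (measurable_hybrid hmeasξ hmeasη) hks (measurable_pairKernel hw_meas)
    (fun i hi => by
      simpa only [hybrid_self] using memLp_pairKernel_hybrid hw_meas hmeasξ hmeasη hint4 (hne i hi))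
    fun i hi => integral_pairKernel_hybrid_eq_zero hdeg (hne i hi)
  simp only [hybrid_self] at hbound
  simp_rw [sum_Iio_add_sum_Ioi_eq_sum_pairKernel_hybrid, influence, sum_Iio_add_sum_Ioi, mul_assoc]
  refine hbound.trans (mul_le_mul_of_nonneg_left ?_ (by norm_num))
  refine sq_sum_sqrt_le_mul_sq_sum hρ (fun i _ => ?_) fun i hi =>
    integral_pairKernel_hybrid_pow_four_le hdom (hne i hi)
  split_ifs <;> exact integral_nonneg fun _ => sq_nonneg _

/-- Fourth moment bound for the swapped increment in the Lindeberg step: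
`E[(W_k − W_{k,0})⁴] ≤ 3 ρ Inf_k²`, where
`W_k − W_{k,0} = Σ_{i<k} w_{i,k}(ηᵢ,ξ_k) + Σ_{j>k} w_{k,j}(ξ_k,ξⱼ)`. -/
theorem fourth_moment_increment_le
    (μ : Measure Ω) [IsProbabilityMeasure μ]
    [TopologicalSpace 𝒳] [PolishSpace 𝒳] [BorelSpace 𝒳]
    {n : ℕ} (ξ η : Fin n → Ω → 𝒳)
    (hmeasξ : ∀ i, Measurable (ξ i)) (hmeasη : ∀ i, Measurable (η i))
    (hindep : iIndepFun (Sum.elim ξ η) μ)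
    (w : Fin n → Fin n → 𝒳 → 𝒳 → ℝ)
    (hw_meas : ∀ i j, Measurable (fun q : 𝒳 × 𝒳 => w i j q.1 q.2))
    (hint4 : ∀ i j, i < j →
      Integrable (fun ω => (w i j (ξ i ω) (ξ j ω)) ^ 4) μ ∧
      Integrable (fun ω => (w i j (η i ω) (ξ j ω)) ^ 4) μ)
    (hdeg : ∀ i j, i < j → ∀ a : 𝒳,
      (∫ ω, w i j (ξ i ω) a ∂μ) = 0 ∧ (∫ ω, w i j a (ξ j ω) ∂μ) = 0 ∧
      (∫ ω, w i j (η i ω) a ∂μ) = 0 ∧ (∫ ω, w i j a (η j ω) ∂μ) = 0)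
    (ρ : ℝ) (hρ : 0 ≤ ρ)
    (hdom : ∀ i j, i < j →
      (∫ ω, (w i j (ξ i ω) (ξ j ω)) ^ 4 ∂μ) ≤ ρ * (sigmaSq μ w ξ i j) ^ 2 ∧
      (∫ ω, (w i j (η i ω) (ξ j ω)) ^ 4 ∂μ) ≤ ρ * (sigmaSq μ w ξ i j) ^ 2)
    (k : Fin n) :
    (∫ ω, (∑ i ∈ Finset.Iio k, w i k (η i ω) (ξ k ω) +
            ∑ j ∈ Finset.Ioi k, w k j (ξ k ω) (ξ j ω)) ^ 4 ∂μ) ≤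
      3 * ρ * (influence μ w ξ k) ^ 2 :=
  fourth_moment_increment_le_general μ ξ η hmeasξ hmeasη hindep w hw_meas hint4 hdeg ρ hρ hdom k
end
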